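/- arXiv:math/0303312 — 5 statements merged into one kernel-verified Lean document; each statement's English description precedes it below -/
import Mathlib

section
/- Let B be a finite nonempty set and let σ₁, σ₂ be two cyclic permutations of B (i.e. permutations of B having exactly one orbit, equal to all of B). If σ₁|C = σ₂|C for every subset C ⊆ B with exactly 3 elements, then σ₁ = σ₂. -/
/-- The permutation induced by `f` on the subset `B`: an element `b` is sent to the first
element of the sequence `f b, f (f b), f (f (f b)), ...` that lies in `B`
(and is left fixed if no iterate ever returns to `B`). -/
noncomputable def induced {α : Type*} (f : α → α) (B : Set α) (b : α) : α := by
  classical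
  exact if h : ∃ k, 0 < k ∧ f^[k] b ∈ B then f^[Nat.find h] b else b

/-- `A` is an orbit of the permutation `τ`. -/
def IsOrbit {α : Type*} (τ : Equiv.Perm α) (A : Set α) : Prop :=
  ∃ a, A = {b | τ.SameCycle a b}

/-- The number of orbits of `τ` (fixed points count as orbits). -/
noncomputable def numOrbits {α : Type*} (τ : Equiv.Perm α) : ℕ :=
  Set.ncard {A : Set α | IsOrbit τ A}

/-- `induced f S` acts on `a, b, c` as the 3-cycle `(a, b, c)`. -/
def MapsCyc3 {α : Type*} (f : α → α) (S : Set α) (a b c : α) : Prop :=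
  induced f S a = b ∧ induced f S b = c ∧ induced f S c = a

/-- `induced f S` acts on `a, b, c, d` as the 4-cycle `(a, b, c, d)`. -/
def MapsCyc4 {α : Type*} (f : α → α) (S : Set α) (a b c d : α) : Prop :=
  induced f S a = b ∧ induced f S b = c ∧ induced f S c = d ∧ induced f S d = a

/-- `induced f S` acts on `a, b, c, d` as the product of transpositions `(a, c)(b, d)`. -/
def MapsSwap2 {α : Type*} (f : α → α) (S : Set α) (a b c d : α) : Prop :=
  induced f S a = c ∧ induced f S c = a ∧ induced f S b = d ∧ induced f S d = b

/-- `induced f S` acts on `x, y` as the transposition `(x, y)`. -/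
def MapsSwap {α : Type*} (f : α → α) (S : Set α) (x y : α) : Prop :=
  induced f S x = y ∧ induced f S y = x

/-- `σ` is standard with respect to the "forward cycle" `γ₀`, i.e. `σ∣B = γ₀∣B` for
every orbit `B` of `σ`. -/
def DiscStandardRel {n : ℕ} (γ₀ σ : Equiv.Perm (Fin n)) : Prop :=
  ∀ A : Set (Fin n), IsOrbit σ A → ∀ b ∈ A, induced (⇑σ) A b = induced (⇑γ₀) A b

/-- The orbit partition of `σ` has no crossing: there are no `a < b < c < d` with
`a, c` in one orbit and `b, d` in a different orbit. -/
def OrbitsNoCrossing {n : ℕ} (σ : Equiv.Perm (Fin n)) : Prop :=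
  ¬ ∃ a b c d : Fin n, a < b ∧ b < c ∧ c < d ∧
      σ.SameCycle a c ∧ σ.SameCycle b d ∧ ¬ σ.SameCycle a b

/-- Disc non-crossing relative to a given forward cycle `γ₀`. -/
def DiscNCRel {n : ℕ} (γ₀ σ : Equiv.Perm (Fin n)) : Prop :=
  DiscStandardRel γ₀ σ ∧ OrbitsNoCrossing σ

/-- The set `S_disc-nc(n)` of disc non-crossing permutations of `[n]`
(here `[n] = {1, …, n}` is modelled by `Fin n`, and the forward cycle
`γ₀ = (1, 2, …, n)` is `finRotate n`). -/
def DiscNC {n : ℕ} (σ : Equiv.Perm (Fin n)) : Prop :=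
  DiscNCRel (finRotate n) σ

/-- The external points `{1, …, p}` (0-indexed: values `< p`). -/
def extSet (p q : ℕ) : Set (Fin (p + q)) := {i | (i : ℕ) < p}

/-- The internal points `{p+1, …, p+q}` (0-indexed: values `≥ p`). -/
def intSet (p q : ℕ) : Set (Fin (p + q)) := {i | p ≤ (i : ℕ)}

/-- `γ_ext = (1, 2, …, p)`, the forward cycle on the external points. -/
def gammaExt (p q : ℕ) : Equiv.Perm (Fin (p + q)) :=
  ((List.finRange (p + q)).take p).formPerm

/-- `γ_int = (p+1, p+2, …, p+q)`, the forward cycle on the internal points. -/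
def gammaInt (p q : ℕ) : Equiv.Perm (Fin (p + q)) :=
  ((List.finRange (p + q)).drop p).formPerm

/-- `γ = γ_ext · γ_int`. -/
def gammaAnn (p q : ℕ) : Equiv.Perm (Fin (p + q)) := gammaExt p q * gammaInt p q

/-- `λ_{x,y}`: the permutation fixing `x` and `y` and cycling the remaining points as
`(γ_ext(x), γ_ext²(x), …, γ_ext^{p-1}(x), γ_int(y), γ_int²(y), …, γ_int^{q-1}(y))`. -/
def lamPerm (p q : ℕ) (x y : Fin (p + q)) : Equiv.Perm (Fin (p + q)) :=
  (((List.range (p - 1)).map fun k => (gammaExt p q ^ (k + 1)) x) ++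
    ((List.range (q - 1)).map fun k => (gammaInt p q ^ (k + 1)) y)).formPerm

/-- `τ` is standard in `(p,q)`-annular sense. -/
def AnnStandard (p q : ℕ) (τ : Equiv.Perm (Fin (p + q))) : Prop :=
  (∀ A : Set (Fin (p + q)), IsOrbit τ A →
    (∀ b ∈ A ∩ extSet p q,
        induced (⇑τ) (A ∩ extSet p q) b = induced (⇑(gammaExt p q)) (A ∩ extSet p q) b) ∧
    (∀ b ∈ A ∩ intSet p q,
        induced (⇑τ) (A ∩ intSet p q) b = induced (⇑(gammaInt p q)) (A ∩ intSet p q) b)) ∧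
  (∀ A : Set (Fin (p + q)), IsOrbit τ A →
    (A ∩ extSet p q).Nonempty → (A ∩ intSet p q).Nonempty →
    (∃! a, a ∈ A ∩ extSet p q ∧ τ a ∈ intSet p q) ∧
    (∃! a, a ∈ A ∩ intSet p q ∧ τ a ∈ extSet p q))

/-- The annular crossing pattern (AC-1). -/
def AC1 (p q : ℕ) (τ : Equiv.Perm (Fin (p + q))) : Prop :=
  ∃ a b c d : Fin (p + q), List.Pairwise (· ≠ ·) [a, b, c, d] ∧
    MapsCyc4 (⇑(gammaAnn p q)) {a, b, c, d} a b c d ∧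
    MapsSwap2 (⇑τ) {a, b, c, d} a b c d

/-- The annular crossing pattern (AC-2). -/
def AC2 (p q : ℕ) (τ : Equiv.Perm (Fin (p + q))) : Prop :=
  ∃ a b c x y : Fin (p + q), List.Pairwise (· ≠ ·) [a, b, c, x, y] ∧
    x ∈ extSet p q ∧ y ∈ intSet p q ∧
    MapsCyc3 (⇑(lamPerm p q x y)) {a, b, c} a b c ∧
    MapsCyc3 (⇑τ) {a, b, c, x, y} a c b ∧
    MapsSwap (⇑τ) {a, b, c, x, y} x y

/-- The annular crossing pattern (AC-3). -/
def AC3 (p q : ℕ) (τ : Equiv.Perm (Fin (p + q))) : Prop :=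
  ∃ a b c d x y : Fin (p + q), List.Pairwise (· ≠ ·) [a, b, c, d, x, y] ∧
    x ∈ extSet p q ∧ y ∈ intSet p q ∧
    MapsCyc4 (⇑(lamPerm p q x y)) {a, b, c, d} a b c d ∧
    MapsSwap2 (⇑τ) {a, b, c, d, x, y} a b c d ∧
    MapsSwap (⇑τ) {a, b, c, d, x, y} x y

/-- The set `S_ann-nc(p,q)` of `(p,q)`-annular non-crossing permutations. -/
def AnnNC (p q : ℕ) (τ : Equiv.Perm (Fin (p + q))) : Prop :=
  AnnStandard p q τ ∧ ¬ AC1 p q τ ∧ ¬ AC2 p q τ ∧ ¬ AC3 p q τ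

/-- A `(p,q)`-connecting set: meets both the external and internal points. -/
def ConnectingBlock (p q : ℕ) (B : Set (Fin (p + q))) : Prop :=
  (B ∩ extSet p q).Nonempty ∧ (B ∩ intSet p q).Nonempty

/-- `τ` is `(p,q)`-connected: it has a `(p,q)`-connecting orbit. -/
def AnnConnected (p q : ℕ) (τ : Equiv.Perm (Fin (p + q))) : Prop :=
  ∃ A : Set (Fin (p + q)), IsOrbit τ A ∧ ConnectingBlock p q A

/-- A family of blocks has no crossing: no `a < b < c < d` with `a, c` in one block and
`b, d` in a different block. -/
def NoCrossing {n : ℕ} (ρ : Set (Set (Fin n))) : Prop :=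
  ¬ ∃ (a b c d : Fin n) (B C : Set (Fin n)), B ∈ ρ ∧ C ∈ ρ ∧ B ≠ C ∧
      a < b ∧ b < c ∧ c < d ∧ a ∈ B ∧ c ∈ B ∧ b ∈ C ∧ d ∈ C

lemma induced_apply_mem {α : Type*} (f : α → α) (C : Set α) (b : α) (hb : f b ∈ C) :
    induced f C b = f b := by
  classical
  have hex : ∃ k, 0 < k ∧ f^[k] b ∈ C := ⟨1, one_pos, by simpa⟩
  have hle : Nat.find hex ≤ 1 := Nat.find_le ⟨one_pos, by simpa⟩
  have hpos : 0 < Nat.find hex := (Nat.find_spec hex).1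
  have h1 : Nat.find hex = 1 := le_antisymm hle hpos
  simp only [induced, dif_pos hex, h1, Function.iterate_one]

/-- Let `B` be a finite nonempty set and let `σ₁, σ₂` be two cyclic permutations of `B`
(permutations having exactly one orbit, equal to all of `B`, i.e. any two points lie on
the same cycle).  If `σ₁∣C = σ₂∣C` for every 3-element subset `C ⊆ B`, then `σ₁ = σ₂`. -/
theorem stmt_0 {B : Type*} [Fintype B] [Nonempty B] (σ₁ σ₂ : Equiv.Perm B)
    (h₁ : ∀ x y : B, σ₁.SameCycle x y) (h₂ : ∀ x y : B, σ₂.SameCycle x y)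
    (h : ∀ C : Set B, C.ncard = 3 → ∀ b ∈ C, induced (⇑σ₁) C b = induced (⇑σ₂) C b) :
    σ₁ = σ₂ := by
  ext b
  by_contra hne
  -- σ₁ b ≠ b
  have hb1 : σ₁ b ≠ b := by
    intro hfix
    have hne2 : σ₂ b ≠ b := fun hh => hne (by rw [hfix, hh])
    obtain ⟨k, hk⟩ := h₁ b (σ₂ b)
    have hfp : Function.IsFixedPt (⇑σ₁) b := hfix
    exact hne2 (hk ▸ hfp.perm_zpow k)
  have hb2 : σ₂ b ≠ b := by
    intro hfix
    obtain ⟨k, hk⟩ := h₂ b (σ₁ b)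
    have hfp : Function.IsFixedPt (⇑σ₂) b := hfix
    exact hb1 (hk ▸ hfp.perm_zpow k)
  set C : Set B := {b, σ₁ b, σ₂ b} with hC
  have hcard : C.ncard = 3 := by
    rw [hC]
    rw [Set.ncard_insert_of_notMem (by simp [hb1.symm, hb2.symm]),
        Set.ncard_insert_of_notMem (by simpa using hne), Set.ncard_singleton]
  have hbC : b ∈ C := by simp [hC]
  have e1 : induced (⇑σ₁) C b = σ₁ b := induced_apply_mem _ _ _ (by simp [hC])
  have e2 : induced (⇑σ₂) C b = σ₂ b := induced_apply_mem _ _ _ (by simp [hC])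
  have := h C hcard b hbC
  rw [e1, e2] at this
  exact hne this
end

section
/- Let n be a positive integer. For all permutations τ, σ of [n] one has #(τ) + #(τ⁻¹σ) + #(σ) ≤ n + 2·#(τ ∨ σ). -/
/-- `b` lies in the orbit of `a` under the joint action of `τ` and `σ` (the action of the
subgroup generated by `τ` and `σ`). -/
def SameJointOrbit {α : Type*} (τ σ : Equiv.Perm α) (a b : α) : Prop :=
  ∃ g ∈ Subgroup.closure ({τ, σ} : Set (Equiv.Perm α)), g a = b

/-- `#(τ ∨ σ)`: the number of orbits of the joint action of `τ` and `σ`. -/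
noncomputable def numJointOrbits {α : Type*} (τ σ : Equiv.Perm α) : ℕ :=
  Set.ncard {A : Set α | ∃ a, A = {b | SameJointOrbit τ σ a b}}


/-! Induction on `n - #(τ⁻¹σ)`. If `τ⁻¹σ ≠ 1`, pick `b` with `a := τ⁻¹σ b ≠ b` and pass to
`σ' = σ (a b)`: then `τ⁻¹σ'` fixes `a` and has one cycle more than `τ⁻¹σ`. Right multiplication
by `(a b)` does not change a partition into orbits once the classes of `a` and `b` are glued,
so `#σ ≤ #σ' + 1` and `#(τ ∨ σ') ≤ #(τ ∨ σ) + 1`. If `a, b` stay in one orbit of `τ ∨ σ'`, the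
joint orbits do not change at all; otherwise `a, b` lie in different cycles of `σ'`, which are
merged by `(a b)`, so `#σ' = #σ + 1`. In both cases the inequality for `(τ, σ')` implies the
one for `(τ, σ)`. -/

namespace Setoid

variable {α : Type*} {r s : Setoid α} {a b : α}

/-- The coarsening of `r` gluing the classes of `a` and `b`: the class of `b` is sent to that
of `a`. -/
noncomputable def merge (r : Setoid α) (a b : α) : Setoid α := by
  classical
  exact ker fun x => if r x b then Quotient.mk r a else Quotient.mk r x

theorem le_merge : r ≤ r.merge a b := by
  intro x y h
  have hb : r x b ↔ r y b := ⟨fun hx => r.trans (r.symm h) hx, fun hy => r.trans h hy⟩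
  rw [merge, ker_def]
  by_cases hyb : r y b <;> simp [hyb, hb, Quotient.sound h]

theorem merge_rel : r.merge a b a b := by
  rw [merge, ker_def]
  simp

theorem merge_le (h : r ≤ s) (hab : s a b) : r.merge a b ≤ s := by
  classical
  have rep : ∀ z, ∃ w, s z w ∧
      Quotient.mk r w = if r z b then Quotient.mk r a else Quotient.mk r z := by
    intro z
    by_cases hz : r z b
    · exact ⟨a, s.trans (h hz) (s.symm hab), by simp [hz]⟩
    · exact ⟨z, s.refl z, by simp [hz]⟩
  intro x y hxy
  rw [merge, ker_def] at hxy
  obtain ⟨u, hxu, hu⟩ := rep x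
  obtain ⟨v, hyv, hv⟩ := rep y
  have huv : r u v := Quotient.exact (hu.trans (hxy.trans hv.symm))
  exact s.trans hxu (s.trans (h huv) (s.symm hyv))

theorem merge_eq_self (hab : r a b) : r.merge a b = r :=
  le_antisymm (merge_le le_rfl hab) le_merge

theorem card_quotient_le_of_le [Finite α] (h : r ≤ s) :
    Nat.card (Quotient s) ≤ Nat.card (Quotient r) :=
  Nat.card_le_card_of_surjective _ (Quotient.map_surjective (f := id) h Function.surjective_id)

theorem card_quotient_merge_add_one [Finite α] (hab : ¬ r a b) :
    Nat.card (Quotient (r.merge a b)) + 1 = Nat.card (Quotient r) := by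
  classical
  set g : α → Quotient r := fun x => if r x b then Quotient.mk r a else Quotient.mk r x
  have hrange : Set.range g = {Quotient.mk r b}ᶜ := by
    ext c
    induction c using Quotient.ind with | _ z => ?_
    simp only [Set.mem_range, Set.mem_compl_iff, Set.mem_singleton_iff, Quotient.eq, g]
    constructor
    · rintro ⟨x, hx⟩
      split_ifs at hx with hxb
      · exact fun hzb => hab (r.trans (Quotient.exact hx) hzb)
      · exact fun hzb => hxb (r.trans (Quotient.exact hx) hzb)
    · exact fun hzb => ⟨z, by simp [hzb]⟩
  rw [merge, Nat.card_congr (quotientKerEquivRange g), hrange, Nat.card_coe_set_eq,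
    ← Set.ncard_singleton (Quotient.mk r b), Set.ncard_compl_add_ncard]

theorem card_quotient_le_card_quotient_merge_add_one [Finite α] :
    Nat.card (Quotient r) ≤ Nat.card (Quotient (r.merge a b)) + 1 := by
  by_cases hab : r a b
  · rw [merge_eq_self hab]
    omega
  · rw [card_quotient_merge_add_one hab]

theorem ncard_setOf_classes (r : Setoid α) :
    {A : Set α | ∃ a, A = {b | r a b}}.ncard = Nat.card (Quotient r) := by
  have h : {A : Set α | ∃ a, A = {b | r a b}} = r.classes := by
    ext A
    simp only [classes, Set.mem_ofPred_eq, r.comm']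
  rw [h, ← Nat.card_coe_set_eq, Nat.card_congr (quotientEquivClasses r)]

end Setoid

namespace SameJointOrbit

open Equiv

variable {α : Type*}

def setoid (τ σ : Perm α) : Setoid α where
  r := SameJointOrbit τ σ
  iseqv := by
    refine ⟨fun x => ⟨1, one_mem _, rfl⟩, ?_, ?_⟩
    · rintro x y ⟨g, hg, rfl⟩
      exact ⟨g⁻¹, inv_mem hg, g.symm_apply_apply x⟩
    · rintro x y z ⟨g, hg, rfl⟩ ⟨h, hh, rfl⟩
      exact ⟨h * g, mul_mem hh hg, rfl⟩

theorem apply_left (τ σ : Perm α) (x : α) : SameJointOrbit τ σ x (τ x) :=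
  ⟨τ, Subgroup.subset_closure (Set.mem_insert _ _), rfl⟩

theorem apply_right (τ σ : Perm α) (x : α) : SameJointOrbit τ σ x (σ x) :=
  ⟨σ, Subgroup.subset_closure (Set.mem_insert_of_mem _ rfl), rfl⟩

theorem setoid_le {E : Setoid α} {τ σ : Perm α} (hτ : ∀ x, E x (τ x)) (hσ : ∀ x, E x (σ x)) :
    setoid τ σ ≤ E := by
  have key : ∀ g ∈ Subgroup.closure {τ, σ}, ∀ x, E x (g x) := fun g hg => by
    induction hg using Subgroup.closure_induction with
    | mem g hg =>
      rcases hg with rfl | rfl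
      exacts [hτ, hσ]
    | one => exact E.refl
    | mul g h _ _ ihg ihh => exact fun x => E.trans (ihh x) (ihg (h x))
    | inv g _ ih => exact fun x => by simpa using E.symm (ih (g⁻¹ x))
  rintro x y ⟨g, hg, rfl⟩
  exact key g hg x

theorem sameCycle_setoid_le (τ σ : Perm α) : Perm.SameCycle.setoid σ ≤ setoid τ σ := by
  intro x y hxy
  obtain ⟨k, rfl⟩ : σ.SameCycle x y := hxy
  have hσ : σ ∈ Subgroup.closure ({τ, σ} : Set (Perm α)) :=
    Subgroup.subset_closure (Set.mem_insert_of_mem _ rfl)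
  exact ⟨σ ^ k, zpow_mem hσ k, rfl⟩

end SameJointOrbit

theorem numOrbits_eq_card_quotient {α : Type*} (π : Equiv.Perm α) :
    numOrbits π = Nat.card (Quotient (Equiv.Perm.SameCycle.setoid π)) :=
  Setoid.ncard_setOf_classes (Equiv.Perm.SameCycle.setoid π)

theorem numJointOrbits_eq_card_quotient {α : Type*} (τ σ : Equiv.Perm α) :
    numJointOrbits τ σ = Nat.card (Quotient (SameJointOrbit.setoid τ σ)) :=
  Setoid.ncard_setOf_classes (SameJointOrbit.setoid τ σ)

namespace Equiv.Perm

variable {α : Type*} {π τ σ : Perm α} {a b : α}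

theorem sameCycle_setoid_le {E : Setoid α} (h : ∀ x, E x (π x)) : SameCycle.setoid π ≤ E :=
  (SameJointOrbit.sameCycle_setoid_le π π).trans (SameJointOrbit.setoid_le h h)

theorem numOrbits_le_card [Finite α] : numOrbits π ≤ Nat.card α := by
  rw [numOrbits_eq_card_quotient]
  exact Nat.card_le_card_of_surjective _ Quotient.mk_surjective

theorem numOrbits_le_numJointOrbits_self [Finite α] : numOrbits π ≤ numJointOrbits π π := by
  rw [numOrbits_eq_card_quotient, numJointOrbits_eq_card_quotient]
  exact Setoid.card_quotient_le_of_le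
    (SameJointOrbit.setoid_le (fun x => (SameCycle.refl π x).apply_right)
      (fun x => (SameCycle.refl π x).apply_right))

variable [DecidableEq α]

theorem rel_mul_swap_apply {E : Setoid α} (hπ : ∀ x, E x (π x)) (hab : E a b) (x : α) :
    E x ((π * swap a b) x) := by
  refine E.trans ?_ (hπ (swap a b x))
  rw [swap_apply_def]
  split_ifs with hxa hxb
  · exact hxa ▸ hab
  · exact hxb ▸ E.symm hab
  · exact E.refl x

theorem sameCycle_setoid_mul_swap_le_merge :
    SameCycle.setoid (π * swap a b) ≤ (SameCycle.setoid π).merge a b :=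
  sameCycle_setoid_le <| rel_mul_swap_apply
    (fun x => Setoid.le_merge (SameCycle.refl π x).apply_right) Setoid.merge_rel

theorem sameJointOrbit_setoid_le_merge_mul_swap :
    SameJointOrbit.setoid τ σ ≤ (SameJointOrbit.setoid τ (σ * swap a b)).merge a b := by
  refine SameJointOrbit.setoid_le (fun x => Setoid.le_merge (SameJointOrbit.apply_left _ _ x))
    fun x => ?_
  simpa using rel_mul_swap_apply (E := (SameJointOrbit.setoid τ (σ * swap a b)).merge a b)
    (fun y => Setoid.le_merge (SameJointOrbit.apply_right τ _ y)) Setoid.merge_rel x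

theorem sameCycle_mul_swap_of_not_sameCycle [Finite α] (h : ¬ π.SameCycle a b) :
    (π * swap a b).SameCycle a b := by
  -- `π * swap a b` sends `a` to `π b` and then follows `π`, which reaches `b` before `a`.
  have walk : ∀ j : ℕ,
      (π * swap a b).SameCycle a ((π ^ j) (π b)) ∨ (π * swap a b).SameCycle a b := by
    intro j
    induction j with
    | zero => exact Or.inl (by simpa using (SameCycle.refl (π * swap a b) a).apply_right)
    | succ j ih =>
      rcases ih with ih | ih
      · set z := (π ^ j) (π b)
        have hbz : π.SameCycle b z := (SameCycle.refl π b).apply_right.pow_right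
        have hza : z ≠ a := fun hza => h (hza ▸ hbz).symm
        by_cases hzb : z = b
        · exact Or.inr (hzb ▸ ih)
        · have hz : (π * swap a b) z = (π ^ (j + 1)) (π b) := by
            rw [mul_apply, swap_apply_of_ne_of_ne hza hzb, pow_succ', mul_apply]
          exact Or.inl (hz ▸ ih.apply_right)
      · exact Or.inr ih
  obtain ⟨j, hj⟩ := (SameCycle.refl π b).apply_left.exists_nat_pow_eq
  rcases walk j with hw | hw
  · rwa [hj] at hw
  · exact hw

theorem numOrbits_le_numOrbits_mul_swap_add_one [Finite α] :
    numOrbits π ≤ numOrbits (π * swap a b) + 1 := by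
  rw [numOrbits_eq_card_quotient, numOrbits_eq_card_quotient]
  exact Setoid.card_quotient_le_card_quotient_merge_add_one.trans
    (Nat.add_le_add_right (Setoid.card_quotient_le_of_le sameCycle_setoid_mul_swap_le_merge) 1)

theorem numOrbits_eq_numOrbits_mul_swap_add_one [Finite α] (h : ¬ π.SameCycle a b) :
    numOrbits π = numOrbits (π * swap a b) + 1 := by
  have hab := sameCycle_mul_swap_of_not_sameCycle h
  have hle : SameCycle.setoid π ≤ SameCycle.setoid (π * swap a b) := by
    refine sameCycle_setoid_le fun x => ?_
    simpa using rel_mul_swap_apply (E := SameCycle.setoid (π * swap a b))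
      (fun y => (SameCycle.refl _ y).apply_right) hab x
  have heq : (SameCycle.setoid π).merge a b = SameCycle.setoid (π * swap a b) :=
    le_antisymm (Setoid.merge_le hle hab) sameCycle_setoid_mul_swap_le_merge
  rw [numOrbits_eq_card_quotient, numOrbits_eq_card_quotient, ← heq,
    Setoid.card_quotient_merge_add_one h]

theorem numOrbits_mul_swap_of_apply_eq [Finite α] (hab : a ≠ b) (h : π b = a) :
    numOrbits (π * swap a b) = numOrbits π + 1 := by
  have hfix : (π * swap a b) a = a := by simp [h]
  have := numOrbits_eq_numOrbits_mul_swap_add_one (fun h' => hab (h'.eq_of_left hfix))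
  rwa [mul_swap_mul_self] at this

theorem numJointOrbits_mul_swap_le [Finite α] :
    numJointOrbits τ (σ * swap a b) ≤ numJointOrbits τ σ + 1 := by
  rw [numJointOrbits_eq_card_quotient, numJointOrbits_eq_card_quotient]
  exact Setoid.card_quotient_le_card_quotient_merge_add_one.trans
    (Nat.add_le_add_right (Setoid.card_quotient_le_of_le sameJointOrbit_setoid_le_merge_mul_swap) 1)

theorem numJointOrbits_mul_swap_le_of_sameJointOrbit [Finite α]
    (h : SameJointOrbit τ (σ * swap a b) a b) :
    numJointOrbits τ (σ * swap a b) ≤ numJointOrbits τ σ := by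
  rw [numJointOrbits_eq_card_quotient, numJointOrbits_eq_card_quotient]
  refine Setoid.card_quotient_le_of_le ?_
  simpa [Setoid.merge_eq_self (r := SameJointOrbit.setoid τ (σ * swap a b)) h] using
    sameJointOrbit_setoid_le_merge_mul_swap (τ := τ) (σ := σ) (a := a) (b := b)

theorem numOrbits_add_numOrbits_inv_mul_add_numOrbits_le [Finite α] (τ σ : Perm α) :
    numOrbits τ + numOrbits (τ⁻¹ * σ) + numOrbits σ ≤ Nat.card α + 2 * numJointOrbits τ σ := by
  by_cases hρ : τ⁻¹ * σ = 1
  · obtain rfl : τ = σ := inv_mul_eq_one.mp hρ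
    have := numOrbits_le_card (π := τ⁻¹ * τ)
    have := numOrbits_le_numJointOrbits_self (π := τ)
    omega
  obtain ⟨b, hb⟩ : ∃ b, (τ⁻¹ * σ) b ≠ b := by
    by_contra! h
    exact hρ (Equiv.ext h)
  obtain ⟨a, ha⟩ : ∃ a, (τ⁻¹ * σ) b = a := ⟨_, rfl⟩
  have hsplit : numOrbits (τ⁻¹ * (σ * swap a b)) = numOrbits (τ⁻¹ * σ) + 1 := by
    rw [← mul_assoc]
    exact numOrbits_mul_swap_of_apply_eq (ha ▸ hb) ha
  have hbound := numOrbits_le_card (π := τ⁻¹ * (σ * swap a b))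
  have ih := numOrbits_add_numOrbits_inv_mul_add_numOrbits_le τ (σ * swap a b)
  by_cases hab : SameJointOrbit τ (σ * swap a b) a b
  · have := numJointOrbits_mul_swap_le_of_sameJointOrbit hab
    have := numOrbits_le_numOrbits_mul_swap_add_one (π := σ) (a := a) (b := b)
    omega
  · have hσ := numOrbits_eq_numOrbits_mul_swap_add_one (π := σ * swap a b)
      fun h => hab (SameJointOrbit.sameCycle_setoid_le τ _ h)
    rw [mul_swap_mul_self] at hσ
    have := numJointOrbits_mul_swap_le (τ := τ) (σ := σ) (a := a) (b := b)
    omega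
termination_by Nat.card α - numOrbits (τ⁻¹ * σ)
decreasing_by omega

end Equiv.Perm

theorem stmt_2_general (n : ℕ) (τ σ : Equiv.Perm (Fin n)) :
    numOrbits τ + numOrbits (τ⁻¹ * σ) + numOrbits σ ≤ n + 2 * numJointOrbits τ σ := by
  simpa using Equiv.Perm.numOrbits_add_numOrbits_inv_mul_add_numOrbits_le τ σ

/-- Inequality (2.10): `#(τ) + #(τ⁻¹σ) + #(σ) ≤ n + 2·#(τ ∨ σ)` for all `τ, σ ∈ S([n])`. -/
theorem stmt_2 (n : ℕ) (hn : 0 < n) (τ σ : Equiv.Perm (Fin n)) :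
    numOrbits τ + numOrbits (τ⁻¹ * σ) + numOrbits σ ≤ n + 2 * numJointOrbits τ σ :=
  stmt_2_general n τ σ
end

section
/- Let p and q be positive integers and let τ be a permutation of [p+q] which is (p,q)-disconnected, so that {1,...,p} and {p+1,...,p+q} are unions of orbits of τ; write τ_ext = τ|{1,...,p} and τ_int = τ|{p+1,...,p+q}. Then τ ∈ S_ann-nc(p,q) if and only if τ_ext ∈ S_disc-nc({1,...,p}) and τ_int ∈ S_disc-nc({p+1,...,p+q}). -/
set_option maxHeartbeats 1000000


/-! ### Auxiliary lemmas for the proof of `stmt_4` -/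

section InducedBasics
variable {α : Type*}

lemma induced_eq (f : α → α) (S : Set α) (b : α) {k : ℕ} (hk : 0 < k)
    (hmem : f^[k] b ∈ S) (hmin : ∀ j, 0 < j → j < k → f^[j] b ∉ S) :
    induced f S b = f^[k] b := by
  classical
  have h : ∃ k, 0 < k ∧ f^[k] b ∈ S := ⟨k, hk, hmem⟩
  have hfind : Nat.find h = k := by
    rw [Nat.find_eq_iff]
    exact ⟨⟨hk, hmem⟩, fun j hj hh => by
      rcases Nat.eq_zero_or_pos j with rfl | hj0
      · exact absurd hh.1 (lt_irrefl 0)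
      · exact hmin j hj0 hj hh.2⟩
  rw [induced, dif_pos h, hfind]

lemma induced_ne {f : α → α} {S : Set α} {x y : α} (hne : y ≠ x) (h : induced f S x = y) :
    ∃ k, 0 < k ∧ f^[k] x = y ∧ y ∈ S ∧ ∀ j, 0 < j → j < k → f^[j] x ∉ S := by
  classical
  by_cases hex : ∃ k, 0 < k ∧ f^[k] x ∈ S
  · rw [induced, dif_pos hex] at h
    refine ⟨Nat.find hex, (Nat.find_spec hex).1, h, h ▸ (Nat.find_spec hex).2, ?_⟩
    intro j hj0 hj hjS
    exact Nat.find_min hex hj ⟨hj0, hjS⟩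
  · rw [induced, dif_neg hex] at h
    exact absurd h.symm hne

lemma induced_congr {f g : α → α} {S : Set α} {b : α} (h : ∀ k, f^[k] b = g^[k] b) :
    induced f S b = induced g S b := by
  classical
  have hiff : ∀ k, (0 < k ∧ f^[k] b ∈ S) ↔ (0 < k ∧ g^[k] b ∈ S) := fun k => by rw [h k]
  by_cases hex : ∃ k, 0 < k ∧ f^[k] b ∈ S
  · have hex' : ∃ k, 0 < k ∧ g^[k] b ∈ S := by
      obtain ⟨k, hk⟩ := hex; exact ⟨k, (hiff k).1 hk⟩
    have hfind : Nat.find hex = Nat.find hex' :=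
      le_antisymm (Nat.find_le ((hiff _).2 (Nat.find_spec hex')))
        (Nat.find_le ((hiff _).1 (Nat.find_spec hex)))
    rw [induced, induced, dif_pos hex, dif_pos hex', hfind, h]
  · have hex' : ¬ ∃ k, 0 < k ∧ g^[k] b ∈ S := by
      intro ⟨k, hk⟩; exact hex ⟨k, (hiff k).2 hk⟩
    rw [induced, induced, dif_neg hex, dif_neg hex']

lemma induced_singleton (f : α → α) (a : α) : induced f {a} a = a := by
  classical
  by_cases hex : ∃ k, 0 < k ∧ f^[k] a ∈ ({a} : Set α)
  · rw [induced, dif_pos hex]; exact (Nat.find_spec hex).2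
  · rw [induced, dif_neg hex]

end InducedBasics

/-- cyclic distance on `[0, m)` -/
def ddist (m u v : ℕ) : ℕ := if u ≤ v then v - u else m + v - u

lemma mod2 {m u j : ℕ} (hu : u < m) (hj : j < m) :
    (u + j) % m = if u + j < m then u + j else u + j - m := by
  split
  · exact Nat.mod_eq_of_lt ‹_›
  · rw [Nat.mod_eq_sub_mod (by omega)]
    exact Nat.mod_eq_of_lt (by omega)

lemma induced_rot {n : ℕ} (f : Fin n → Fin n) (o m : ℕ) (hm : 0 < m)
    (hf : ∀ x : Fin n, o ≤ x.val → x.val < o + m →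
      ∀ k, (f^[k] x).val = o + ((x.val - o + k) % m))
    (S : Set (Fin n)) (hS : ∀ s ∈ S, o ≤ s.val ∧ s.val < o + m)
    {x y : Fin n} (hx : x ∈ S) (hy : y ∈ S) (hxy : x ≠ y)
    (hmin : ∀ s ∈ S, s ≠ x →
      ddist m (x.val - o) (y.val - o) ≤ ddist m (x.val - o) (s.val - o)) :
    induced f S x = y := by
  obtain ⟨hxo, hxm⟩ := hS x hx
  obtain ⟨hyo, hym⟩ := hS y hy
  set u := x.val - o with hu
  set v := y.val - o with hv
  have hum : u < m := by omega
  have hvm : v < m := by omega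
  have huv : u ≠ v := by
    intro h
    exact hxy (Fin.ext (by omega))
  set k := ddist m u v with hk
  have hk0 : 0 < k := by rw [hk, ddist]; split <;> omega
  have hkm : k < m := by rw [hk, ddist]; split <;> omega
  have hstep : (f^[k] x) = y := by
    apply Fin.ext
    rw [hf x hxo hxm k]
    have : (u + k) % m = v := by
      rw [hk, ddist]
      split
      · rw [show u + (v - u) = v by omega]; exact Nat.mod_eq_of_lt hvm
      · rw [show u + (m + v - u) = m + v by omega, Nat.add_mod_left]
        exact Nat.mod_eq_of_lt hvm
    rw [this]; omega
  rw [← hstep]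
  apply induced_eq f S x hk0 (hstep ▸ hy)
  intro j hj0 hj hjS
  set s := f^[j] x with hs
  have hsval : s.val = o + ((u + j) % m) := hf x hxo hxm j
  have hcase : ((u + j) % m = u + j ∧ u + j < m) ∨
      ((u + j) % m = u + j - m ∧ m ≤ u + j ∧ u + j - m < m) := by
    rw [mod2 hum (by omega)]
    split
    · exact Or.inl ⟨rfl, ‹_›⟩
    · exact Or.inr ⟨rfl, by omega, by omega⟩
  have hsx : s ≠ x := by
    intro h
    have hh : s.val = x.val := by rw [h]
    rw [hsval] at hh
    rcases hcase with ⟨he, h2⟩ | ⟨he, h2, h3⟩ <;> rw [he] at hh <;> omega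
  have hmin' := hmin s hjS hsx
  have hso : s.val - o = (u + j) % m := by omega
  rw [hk, hso] at hmin'
  have hj' : j < ddist m u v := hj
  rcases hcase with ⟨he, h2⟩ | ⟨he, h2, h3⟩ <;> rw [he] at hmin' <;>
    simp only [ddist] at hmin' hj' <;> split_ifs at hmin' hj' <;> omega

lemma cyc4_incr {n : ℕ} (f : Fin n → Fin n) (o m : ℕ) (hm : 0 < m)
    (hf : ∀ x : Fin n, o ≤ x.val → x.val < o + m →
      ∀ k, (f^[k] x).val = o + ((x.val - o + k) % m))
    (S : Set (Fin n)) (hS : ∀ s ∈ S, o ≤ s.val ∧ s.val < o + m)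
    {a b c d : Fin n} (ha : a ∈ S) (hb : b ∈ S) (hc : c ∈ S) (hd : d ∈ S)
    (hSmem : ∀ s ∈ S, s = a ∨ s = b ∨ s = c ∨ s = d)
    (hab : a ≠ b) (hac : a ≠ c) (had : a ≠ d) (hbc : b ≠ c) (hbd : b ≠ d) (hcd : c ≠ d)
    (h1 : induced f S a = b) (h2 : induced f S b = c)
    (hminb : a.val < b.val) (hminc : a.val < c.val) (hmind : a.val < d.val) :
    b.val < c.val ∧ c.val < d.val := by
  obtain ⟨hao, ham⟩ := hS a ha
  obtain ⟨hbo, hbm⟩ := hS b hb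
  obtain ⟨hco, hcm⟩ := hS c hc
  obtain ⟨hdo, hdm⟩ := hS d hd
  have vab : a.val ≠ b.val := fun h => hab (Fin.ext h)
  have vac : a.val ≠ c.val := fun h => hac (Fin.ext h)
  have vad : a.val ≠ d.val := fun h => had (Fin.ext h)
  have vbc : b.val ≠ c.val := fun h => hbc (Fin.ext h)
  have vbd : b.val ≠ d.val := fun h => hbd (Fin.ext h)
  have vcd : c.val ≠ d.val := fun h => hcd (Fin.ext h)
  have key : ∀ x y : Fin n, x ∈ S → y ∈ S → x ≠ y →
      (∀ s ∈ S, s ≠ x → ddist m (x.val - o) (y.val - o) ≤ ddist m (x.val - o) (s.val - o)) →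
      induced f S x = y := fun x y hx hy hxy hmin =>
    induced_rot f o m hm hf S hS hx hy hxy hmin
  have hbltc : b.val < c.val := by
    by_contra hcon
    have hclt : c.val < b.val := by omega
    rcases Nat.lt_or_ge c.val d.val with hcd' | hcd'
    · have := key a c ha hc hac (by
        intro s hsS hsa
        rcases hSmem s hsS with rfl | rfl | rfl | rfl
        · exact absurd rfl hsa
        all_goals (obtain ⟨h1', h2'⟩ := hS s hsS; simp only [ddist]; split_ifs <;> omega))
      rw [h1] at this
      exact hbc this
    · have hdc : d.val < c.val := by omega
      have := key a d ha hd had (by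
        intro s hsS hsa
        rcases hSmem s hsS with rfl | rfl | rfl | rfl
        · exact absurd rfl hsa
        all_goals (obtain ⟨h1', h2'⟩ := hS s hsS; simp only [ddist]; split_ifs <;> omega))
      rw [h1] at this
      exact hbd this
  refine ⟨hbltc, ?_⟩
  by_contra hcon
  have hdc : d.val < c.val := by omega
  rcases Nat.lt_or_ge b.val d.val with hbd' | hbd'
  · have := key b d hb hd hbd (by
      intro s hsS hsb
      rcases hSmem s hsS with rfl | rfl | rfl | rfl
      · obtain ⟨h1', h2'⟩ := hS s hsS; simp only [ddist]; split_ifs <;> omega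
      · exact absurd rfl hsb
      all_goals (obtain ⟨h1', h2'⟩ := hS s hsS; simp only [ddist]; split_ifs <;> omega))
    rw [h2] at this
    exact hcd this
  · have hdb : d.val < b.val := by omega
    have := key a d ha hd had (by
      intro s hsS hsa
      rcases hSmem s hsS with rfl | rfl | rfl | rfl
      · exact absurd rfl hsa
      all_goals (obtain ⟨h1', h2'⟩ := hS s hsS; simp only [ddist]; split_ifs <;> omega))
    rw [h1] at this
    exact hbd this

section SC
variable {α : Type*} [Fintype α] [DecidableEq α]

omit [Fintype α] [DecidableEq α] in
lemma sameCycle_iterate (σ : Equiv.Perm α) (x : α) (k : ℕ) :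
    σ.SameCycle x ((⇑σ)^[k] x) := ⟨k, by rw [zpow_natCast]; rfl⟩

omit [DecidableEq α] in
lemma sameCycle_exists_iter {σ : Equiv.Perm α} {x y : α} (h : σ.SameCycle x y) :
    ∃ k, 0 < k ∧ (⇑σ)^[k] x = y := by
  obtain ⟨i, hi0, _, hi⟩ := h.exists_pow_eq''
  exact ⟨i, hi0, hi⟩

omit [Fintype α] [DecidableEq α] in
lemma iter_period {f : α → α} {x : α} {K : ℕ} (hK : f^[K] x = x) (t : ℕ) :
    f^[t] x = f^[t % K] x := by
  conv_lhs => rw [← Nat.mod_add_div t K]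
  rw [Function.iterate_add_apply]
  congr 1
  induction t / K with
  | zero => rfl
  | succ n ih => rw [Nat.mul_succ, Function.iterate_add_apply, hK, ih]

omit [DecidableEq α] in
lemma induced_eq_partner (σ : Equiv.Perm α) (S : Set α) (x y : α)
    (hy : y ∈ S) (hxy : x ≠ y) (hcyc : σ.SameCycle x y)
    (hother : ∀ s ∈ S, σ.SameCycle x s → s = x ∨ s = y) :
    induced (⇑σ) S x = y := by
  classical
  obtain ⟨j, hj0, hj⟩ := sameCycle_exists_iter hcyc
  clear hcyc
  induction j using Nat.strong_induction_on with
  | _ j IH =>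
    have hex : ∃ k, 0 < k ∧ (⇑σ)^[k] x ∈ S := ⟨j, hj0, hj ▸ hy⟩
    set k₀ := Nat.find hex with hk₀
    obtain ⟨hk₀0, hk₀S⟩ := Nat.find_spec hex
    have hk₀j : k₀ ≤ j := Nat.find_le ⟨hj0, hj ▸ hy⟩
    have he := hother _ hk₀S (sameCycle_iterate σ x k₀)
    rcases he with he | he
    · have hk₀j' : k₀ < j := by
        rcases lt_or_eq_of_le hk₀j with h | h
        · exact h
        · exfalso
          have he' : (⇑σ)^[k₀] x = x := he
          rw [h, hj] at he'
          exact hxy he'.symm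
      have hj' : (⇑σ)^[j - k₀] x = y := by
        have hh : (⇑σ)^[j - k₀ + k₀] x = y := by rw [Nat.sub_add_cancel hk₀j]; exact hj
        rwa [Function.iterate_add_apply, he] at hh
      exact IH (j - k₀) (by omega) (by omega) hj'
    · rw [← he]
      apply induced_eq _ _ _ hk₀0 hk₀S
      intro i hi0 hi hiS
      exact Nat.find_min hex hi ⟨hi0, hiS⟩

omit [DecidableEq α] in
lemma not_sameCycle_of_swap {σ : Equiv.Perm α} {S : Set α} {x y b : α}
    (hix : induced (⇑σ) S x = y) (hiy : induced (⇑σ) S y = x) (hxy : x ≠ y)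
    (hb : b ∈ S) (hbx : b ≠ x) (hby : b ≠ y) : ¬ σ.SameCycle x b := by
  obtain ⟨k₁, hk₁0, hk₁, _, hmin₁⟩ := induced_ne (Ne.symm hxy) hix
  obtain ⟨k₂, hk₂0, hk₂, _, hmin₂⟩ := induced_ne hxy hiy
  intro hcyc
  obtain ⟨j, _, hj⟩ := sameCycle_exists_iter hcyc
  set K := k₁ + k₂ with hK
  have hKx : (⇑σ)^[K] x = x := by
    rw [hK, Nat.add_comm, Function.iterate_add_apply, hk₁, hk₂]
  have hj' : (⇑σ)^[j % K] x = b := by rw [← iter_period hKx]; exact hj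
  have hjK : j % K < K := Nat.mod_lt _ (by omega)
  set j' := j % K with hj'def
  rcases Nat.eq_zero_or_pos j' with h0 | h0
  · rw [h0] at hj'; exact hbx hj'.symm
  rcases lt_trichotomy j' k₁ with h | h | h
  · exact hmin₁ j' h0 h (hj' ▸ hb)
  · rw [h, hk₁] at hj'; exact hby hj'.symm
  · have hmem : (⇑σ)^[j' - k₁] y ∈ S := by
      rw [← hk₁, ← Function.iterate_add_apply, Nat.sub_add_cancel (le_of_lt h), hj']
      exact hb
    exact hmin₂ (j' - k₁) (by omega) (by omega) hmem
end SC

section Gamma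
variable {p q : ℕ}

lemma take_len : ((List.finRange (p + q)).take p).length = p := by
  simp [Nat.min_eq_left (Nat.le_add_right p q)]

lemma drop_len : ((List.finRange (p + q)).drop p).length = q := by
  simp

lemma take_nodup : ((List.finRange (p + q)).take p).Nodup :=
  (List.take_sublist _ _).nodup (List.nodup_finRange _)

lemma drop_nodup : ((List.finRange (p + q)).drop p).Nodup :=
  (List.drop_sublist _ _).nodup (List.nodup_finRange _)

lemma take_get {i : ℕ} (h : i < p) :
    ((List.finRange (p + q)).take p)[i]'(by rw [take_len]; exact h) =
      ⟨i, lt_of_lt_of_le h (Nat.le_add_right p q)⟩ := by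
  apply Fin.ext
  simp

lemma drop_get {i : ℕ} (h : i < q) :
    ((List.finRange (p + q)).drop p)[i]'(by rw [drop_len]; exact h) =
      ⟨p + i, by omega⟩ := by
  apply Fin.ext
  simp

lemma mem_take {x : Fin (p + q)} : x ∈ (List.finRange (p + q)).take p ↔ x.val < p := by
  rw [List.mem_iff_getElem]
  constructor
  · rintro ⟨i, hi, rfl⟩
    rw [take_len] at hi
    rw [take_get hi]
    exact hi
  · intro h
    exact ⟨x.val, by rw [take_len]; exact h, by rw [take_get h]⟩

lemma mem_drop {x : Fin (p + q)} : x ∈ (List.finRange (p + q)).drop p ↔ p ≤ x.val := by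
  rw [List.mem_iff_getElem]
  constructor
  · rintro ⟨i, hi, rfl⟩
    rw [drop_len] at hi
    rw [drop_get hi]
    simp
  · intro h
    refine ⟨x.val - p, by rw [drop_len]; omega, ?_⟩
    rw [drop_get (by omega)]
    apply Fin.ext
    simp
    omega

lemma gammaExt_lt {x : Fin (p + q)} (h : x.val < p) :
    gammaExt p q x =
      ⟨(x.val + 1) % p, lt_of_lt_of_le (Nat.mod_lt _ (by omega)) (Nat.le_add_right p q)⟩ := by
  have hx : ((List.finRange (p + q)).take p)[x.val]'(by rw [take_len]; exact h) = x := by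
    rw [take_get h]
  rw [gammaExt]
  conv_lhs => rw [← hx]
  rw [List.formPerm_apply_getElem _ take_nodup x.val (by rw [take_len]; exact h)]
  apply Fin.ext
  simp [take_len]

lemma gammaExt_ge {x : Fin (p + q)} (h : p ≤ x.val) : gammaExt p q x = x :=
  List.formPerm_apply_of_notMem (by rw [mem_take]; omega)

lemma gammaInt_ge {x : Fin (p + q)} (h : p ≤ x.val) (hq : 0 < q) :
    gammaInt p q x =
      ⟨p + (x.val - p + 1) % q, by have := Nat.mod_lt (x.val - p + 1) hq; omega⟩ := by
  have hip : x.val - p < q := by omega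
  have hx : ((List.finRange (p + q)).drop p)[x.val - p]'(by rw [drop_len]; exact hip) = x := by
    rw [drop_get hip]; apply Fin.ext; simp; omega
  rw [gammaInt]
  conv_lhs => rw [← hx]
  rw [List.formPerm_apply_getElem _ drop_nodup _ (by rw [drop_len]; exact hip)]
  apply Fin.ext
  simp [drop_len]

lemma gammaInt_lt {x : Fin (p + q)} (h : x.val < p) : gammaInt p q x = x :=
  List.formPerm_apply_of_notMem (by rw [mem_drop]; omega)

lemma gammaAnn_lt {x : Fin (p + q)} (h : x.val < p) :
    (gammaAnn p q x).val = (x.val + 1) % p := by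
  have hh : gammaAnn p q x = gammaExt p q (gammaInt p q x) := rfl
  rw [hh, gammaInt_lt h, gammaExt_lt h]

lemma gammaAnn_ge {x : Fin (p + q)} (h : p ≤ x.val) (hq : 0 < q) :
    (gammaAnn p q x).val = p + (x.val - p + 1) % q := by
  have hh : gammaAnn p q x = gammaExt p q (gammaInt p q x) := rfl
  rw [hh, gammaInt_ge h hq, gammaExt_ge (by simp)]

lemma gammaAnn_iter_lt {x : Fin (p + q)} (h : x.val < p) (k : ℕ) :
    ((⇑(gammaAnn p q))^[k] x).val = (x.val + k) % p := by
  induction k with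
  | zero => simpa using (Nat.mod_eq_of_lt h).symm
  | succ k ih =>
    rw [Function.iterate_succ_apply']
    have hk : ((⇑(gammaAnn p q))^[k] x).val < p := by rw [ih]; exact Nat.mod_lt _ (by omega)
    rw [gammaAnn_lt hk, ih, Nat.mod_add_mod, ← Nat.add_assoc]

lemma gammaAnn_iter_ge {x : Fin (p + q)} (h : p ≤ x.val) (hq : 0 < q) (k : ℕ) :
    ((⇑(gammaAnn p q))^[k] x).val = p + (x.val - p + k) % q := by
  induction k with
  | zero =>
    simp only [Function.iterate_zero, id_eq, Nat.add_zero]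
    rw [Nat.mod_eq_of_lt (show x.val - p < q by omega)]
    omega
  | succ k ih =>
    rw [Function.iterate_succ_apply']
    have hk : p ≤ ((⇑(gammaAnn p q))^[k] x).val := by rw [ih]; omega
    rw [gammaAnn_ge hk hq, ih]
    congr 1
    rw [Nat.add_sub_cancel_left, Nat.mod_add_mod, Nat.add_assoc]

lemma gamma_hf_ext (hp : 0 < p) :
    ∀ x : Fin (p + q), 0 ≤ x.val → x.val < 0 + p →
      ∀ k, ((⇑(gammaAnn p q))^[k] x).val = 0 + ((x.val - 0 + k) % p) := by
  intro x _ h2 k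
  simpa using gammaAnn_iter_lt (by omega) k

lemma gamma_hf_int (hq : 0 < q) :
    ∀ x : Fin (p + q), p ≤ x.val → x.val < p + q →
      ∀ k, ((⇑(gammaAnn p q))^[k] x).val = p + ((x.val - p + k) % q) := by
  intro x h _ k
  exact gammaAnn_iter_ge h hq k

end Gamma

section ACLemmas
variable {p q : ℕ}

lemma crossing_to_AC1 (hp : 0 < p) (hq : 0 < q) (τ : Equiv.Perm (Fin (p + q)))
    {a b c d : Fin (p + q)}
    (o1 : a.val < b.val) (o2 : b.val < c.val) (o3 : c.val < d.val)
    (hsd : d.val < p ∨ p ≤ a.val)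
    (hac : τ.SameCycle a c) (hbd : τ.SameCycle b d) (hnab : ¬ τ.SameCycle a b) :
    AC1 p q τ := by
  have hab : a ≠ b := fun h => by rw [h] at o1; omega
  have hac' : a ≠ c := fun h => by rw [h] at o1; omega
  have had : a ≠ d := fun h => by rw [h] at o1; omega
  have hbc : b ≠ c := fun h => by rw [h] at o2; omega
  have hbd' : b ≠ d := fun h => by rw [h] at o2; omega
  have hcd : c ≠ d := fun h => by rw [h] at o3; omega
  set S : Set (Fin (p + q)) := {a, b, c, d} with hSdef
  have hmem4 : ∀ s : Fin (p + q), s ∈ S → s = a ∨ s = b ∨ s = c ∨ s = d := by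
    intro s hs; simpa [hSdef] using hs
  have haS : a ∈ S := by simp [hSdef]
  have hbS : b ∈ S := by simp [hSdef]
  have hcS : c ∈ S := by simp [hSdef]
  have hdS : d ∈ S := by simp [hSdef]
  have hdlt := d.isLt
  have hswap2 : MapsSwap2 (⇑τ) S a b c d := by
    refine ⟨?_, ?_, ?_, ?_⟩
    · exact induced_eq_partner τ S a c hcS hac' hac (by
        intro s hsS hsc
        rcases hmem4 s hsS with rfl | rfl | rfl | rfl
        · exact Or.inl rfl
        · exact absurd hsc hnab
        · exact Or.inr rfl
        · exact absurd (hsc.trans hbd.symm) hnab)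
    · exact induced_eq_partner τ S c a haS (Ne.symm hac') hac.symm (by
        intro s hsS hsc
        rcases hmem4 s hsS with rfl | rfl | rfl | rfl
        · exact Or.inr rfl
        · exact absurd (hac.trans hsc) hnab
        · exact Or.inl rfl
        · exact absurd (hac.trans (hsc.trans hbd.symm)) hnab)
    · exact induced_eq_partner τ S b d hdS hbd' hbd (by
        intro s hsS hsc
        rcases hmem4 s hsS with rfl | rfl | rfl | rfl
        · exact absurd hsc.symm hnab
        · exact Or.inl rfl
        · exact absurd (hac.trans hsc.symm) hnab
        · exact Or.inr rfl)
    · exact induced_eq_partner τ S d b hbS (Ne.symm hbd') hbd.symm (by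
        intro s hsS hsc
        rcases hmem4 s hsS with rfl | rfl | rfl | rfl
        · exact absurd (hsc.symm.trans hbd.symm) hnab
        · exact Or.inr rfl
        · exact absurd (hac.trans (hbd.trans hsc).symm) hnab
        · exact Or.inl rfl)
  have hpw : List.Pairwise (· ≠ ·) [a, b, c, d] := by
    have hh : (a ≠ b ∧ a ≠ c ∧ a ≠ d) ∧ (b ≠ c ∧ b ≠ d) ∧ c ≠ d :=
      ⟨⟨hab, hac', had⟩, ⟨hbc, hbd'⟩, hcd⟩
    simpa using hh
  rcases hsd with hSide | hSide
  · have hS : ∀ s ∈ S, 0 ≤ s.val ∧ s.val < 0 + p := by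
      intro s hs; rcases hmem4 s hs with rfl | rfl | rfl | rfl <;> omega
    have hf := gamma_hf_ext (p := p) (q := q) hp
    refine ⟨a, b, c, d, hpw, ⟨?_, ?_, ?_, ?_⟩, hswap2⟩
    · exact induced_rot _ 0 p hp hf S hS haS hbS hab (by
        intro s hsS hsne
        rcases hmem4 s hsS with rfl | rfl | rfl | rfl
        · exact absurd rfl hsne
        all_goals (simp only [ddist]; split_ifs <;> omega))
    · exact induced_rot _ 0 p hp hf S hS hbS hcS hbc (by
        intro s hsS hsne
        rcases hmem4 s hsS with rfl | rfl | rfl | rfl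
        all_goals first
          | exact absurd rfl hsne
          | (simp only [ddist]; split_ifs <;> omega))
    · exact induced_rot _ 0 p hp hf S hS hcS hdS hcd (by
        intro s hsS hsne
        rcases hmem4 s hsS with rfl | rfl | rfl | rfl
        all_goals first
          | exact absurd rfl hsne
          | (simp only [ddist]; split_ifs <;> omega))
    · exact induced_rot _ 0 p hp hf S hS hdS haS (Ne.symm had) (by
        intro s hsS hsne
        rcases hmem4 s hsS with rfl | rfl | rfl | rfl
        all_goals first
          | exact absurd rfl hsne
          | (simp only [ddist]; split_ifs <;> omega))
  · have hS : ∀ s ∈ S, p ≤ s.val ∧ s.val < p + q := by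
      intro s hs
      rcases hmem4 s hs with rfl | rfl | rfl | rfl <;> exact ⟨by omega, Fin.is_lt _⟩
    have hf := gamma_hf_int (p := p) (q := q) hq
    refine ⟨a, b, c, d, hpw, ⟨?_, ?_, ?_, ?_⟩, hswap2⟩
    · exact induced_rot _ p q hq hf S hS haS hbS hab (by
        intro s hsS hsne
        rcases hmem4 s hsS with rfl | rfl | rfl | rfl
        all_goals first
          | exact absurd rfl hsne
          | (obtain ⟨hx1, hx2⟩ := hS _ hsS; simp only [ddist]; split_ifs <;> omega))
    · exact induced_rot _ p q hq hf S hS hbS hcS hbc (by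
        intro s hsS hsne
        rcases hmem4 s hsS with rfl | rfl | rfl | rfl
        all_goals first
          | exact absurd rfl hsne
          | (obtain ⟨hx1, hx2⟩ := hS _ hsS; simp only [ddist]; split_ifs <;> omega))
    · exact induced_rot _ p q hq hf S hS hcS hdS hcd (by
        intro s hsS hsne
        rcases hmem4 s hsS with rfl | rfl | rfl | rfl
        all_goals first
          | exact absurd rfl hsne
          | (obtain ⟨hx1, hx2⟩ := hS _ hsS; simp only [ddist]; split_ifs <;> omega))
    · exact induced_rot _ p q hq hf S hS hdS haS (Ne.symm had) (by
        intro s hsS hsne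
        rcases hmem4 s hsS with rfl | rfl | rfl | rfl
        all_goals first
          | exact absurd rfl hsne
          | (obtain ⟨hx1, hx2⟩ := hS _ hsS; simp only [ddist]; split_ifs <;> omega))

lemma AC1_to_crossing (hp : 0 < p) (hq : 0 < q) {τ : Equiv.Perm (Fin (p + q))}
    (hAC : AC1 p q τ) :
    ∃ a b c d : Fin (p + q), a.val < b.val ∧ b.val < c.val ∧ c.val < d.val ∧
      (d.val < p ∨ p ≤ a.val) ∧ τ.SameCycle a c ∧ τ.SameCycle b d ∧ ¬ τ.SameCycle a b := by
  obtain ⟨a, b, c, d, hpw, hcyc, hswap⟩ := hAC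
  obtain ⟨⟨hab, hac, had⟩, ⟨hbc, hbd⟩, hcd⟩ :
      (a ≠ b ∧ a ≠ c ∧ a ≠ d) ∧ (b ≠ c ∧ b ≠ d) ∧ c ≠ d := by simpa using hpw
  obtain ⟨e1, e2, e3, e4⟩ := hcyc
  obtain ⟨s1, s2, s3, s4⟩ := hswap
  obtain ⟨k1, -, hk1, -, -⟩ := induced_ne (Ne.symm hac) s1
  have scac : τ.SameCycle a c := hk1 ▸ sameCycle_iterate τ a k1
  obtain ⟨k2, -, hk2, -, -⟩ := induced_ne (Ne.symm hbd) s3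
  have scbd : τ.SameCycle b d := hk2 ▸ sameCycle_iterate τ b k2
  have hbS : b ∈ ({a, b, c, d} : Set (Fin (p + q))) := by simp
  have nscab : ¬ τ.SameCycle a b := not_sameCycle_of_swap s1 s2 hac hbS (Ne.symm hab) hbc
  have vab : a.val ≠ b.val := fun h => hab (Fin.ext h)
  have vac : a.val ≠ c.val := fun h => hac (Fin.ext h)
  have vad : a.val ≠ d.val := fun h => had (Fin.ext h)
  have vbc : b.val ≠ c.val := fun h => hbc (Fin.ext h)
  have vbd : b.val ≠ d.val := fun h => hbd (Fin.ext h)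
  have vcd : c.val ≠ d.val := fun h => hcd (Fin.ext h)
  obtain ⟨j1, -, hj1, -, -⟩ := induced_ne (Ne.symm hab) e1
  obtain ⟨j2, -, hj2, -, -⟩ := induced_ne (Ne.symm hbc) e2
  obtain ⟨j3, -, hj3, -, -⟩ := induced_ne (Ne.symm hcd) e3
  have haS : a ∈ ({a, b, c, d} : Set (Fin (p + q))) := by simp
  have hcS : c ∈ ({a, b, c, d} : Set (Fin (p + q))) := by simp
  have hdS : d ∈ ({a, b, c, d} : Set (Fin (p + q))) := by simp
  have hmem4 : ∀ s : Fin (p + q), s ∈ ({a, b, c, d} : Set (Fin (p + q))) →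
      s = a ∨ s = b ∨ s = c ∨ s = d := by
    intro s hs; simpa using hs
  rcases Nat.lt_or_ge a.val p with hA | hA
  · -- all four points are external
    have hbp : b.val < p := by
      rw [← hj1, gammaAnn_iter_lt hA j1]; exact Nat.mod_lt _ (by omega)
    have hcp : c.val < p := by
      rw [← hj2, gammaAnn_iter_lt hbp j2]; exact Nat.mod_lt _ (by omega)
    have hdp : d.val < p := by
      rw [← hj3, gammaAnn_iter_lt hcp j3]; exact Nat.mod_lt _ (by omega)
    have hS : ∀ s ∈ ({a, b, c, d} : Set (Fin (p + q))), 0 ≤ s.val ∧ s.val < 0 + p := by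
      intro s hs; rcases hmem4 s hs with rfl | rfl | rfl | rfl <;> omega
    have hf := gamma_hf_ext (p := p) (q := q) hp
    rcases (show (a.val < b.val ∧ a.val < c.val ∧ a.val < d.val) ∨
        (b.val < a.val ∧ b.val < c.val ∧ b.val < d.val) ∨
        (c.val < a.val ∧ c.val < b.val ∧ c.val < d.val) ∨
        (d.val < a.val ∧ d.val < b.val ∧ d.val < c.val) by omega) with
      ⟨m1, m2, m3⟩ | ⟨m1, m2, m3⟩ | ⟨m1, m2, m3⟩ | ⟨m1, m2, m3⟩
    · obtain ⟨p2, p3⟩ := cyc4_incr _ 0 p hp hf _ hS haS hbS hcS hdS hmem4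
        hab hac had hbc hbd hcd e1 e2 m1 m2 m3
      exact ⟨a, b, c, d, m1, p2, p3, Or.inl hdp, scac, scbd, nscab⟩
    · obtain ⟨p2, p3⟩ := cyc4_incr _ 0 p hp hf _ hS
        hbS hcS hdS haS
        (fun s hs => by rcases hmem4 s hs with rfl | rfl | rfl | rfl <;> simp) hbc hbd (Ne.symm hab) hcd (Ne.symm hac) (Ne.symm had) e2 e3 m2 m3 m1
      exact ⟨b, c, d, a, m2, p2, p3, Or.inl (by omega), scbd, scac.symm,
        fun h => nscab (scac.trans h.symm)⟩
    · obtain ⟨p2, p3⟩ := cyc4_incr _ 0 p hp hf _ hS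
        hcS hdS haS hbS
        (fun s hs => by rcases hmem4 s hs with rfl | rfl | rfl | rfl <;> simp) hcd (Ne.symm hac) (Ne.symm hbc) (Ne.symm had) (Ne.symm hbd) hab
        e3 e4 m3 m1 m2
      exact ⟨c, d, a, b, m3, p2, p3, Or.inl (by omega), scac.symm, scbd.symm,
        fun h => nscab (scac.trans (h.trans scbd.symm))⟩
    · obtain ⟨p2, p3⟩ := cyc4_incr _ 0 p hp hf _ hS
        hdS haS hbS hcS
        (fun s hs => by rcases hmem4 s hs with rfl | rfl | rfl | rfl <;> simp) (Ne.symm had) (Ne.symm hbd) (Ne.symm hcd) hab hac hbc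
        e4 e1 m1 m2 m3
      exact ⟨d, a, b, c, m1, p2, p3, Or.inl (by omega), scbd.symm, scac,
        fun h => nscab (h.symm.trans scbd.symm)⟩
  · -- all four points are internal
    have hbp : p ≤ b.val := by
      rw [← hj1, gammaAnn_iter_ge hA hq j1]; omega
    have hcp : p ≤ c.val := by
      rw [← hj2, gammaAnn_iter_ge hbp hq j2]; omega
    have hdp : p ≤ d.val := by
      rw [← hj3, gammaAnn_iter_ge hcp hq j3]; omega
    have hS : ∀ s ∈ ({a, b, c, d} : Set (Fin (p + q))), p ≤ s.val ∧ s.val < p + q := by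
      intro s hs
      rcases hmem4 s hs with rfl | rfl | rfl | rfl <;> exact ⟨by omega, Fin.is_lt _⟩
    have hf := gamma_hf_int (p := p) (q := q) hq
    rcases (show (a.val < b.val ∧ a.val < c.val ∧ a.val < d.val) ∨
        (b.val < a.val ∧ b.val < c.val ∧ b.val < d.val) ∨
        (c.val < a.val ∧ c.val < b.val ∧ c.val < d.val) ∨
        (d.val < a.val ∧ d.val < b.val ∧ d.val < c.val) by omega) with
      ⟨m1, m2, m3⟩ | ⟨m1, m2, m3⟩ | ⟨m1, m2, m3⟩ | ⟨m1, m2, m3⟩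
    · obtain ⟨p2, p3⟩ := cyc4_incr _ p q hq hf _ hS haS hbS hcS hdS hmem4
        hab hac had hbc hbd hcd e1 e2 m1 m2 m3
      exact ⟨a, b, c, d, m1, p2, p3, Or.inr hA, scac, scbd, nscab⟩
    · obtain ⟨p2, p3⟩ := cyc4_incr _ p q hq hf _ hS
        hbS hcS hdS haS
        (fun s hs => by rcases hmem4 s hs with rfl | rfl | rfl | rfl <;> simp) hbc hbd (Ne.symm hab) hcd (Ne.symm hac) (Ne.symm had) e2 e3 m2 m3 m1
      exact ⟨b, c, d, a, m2, p2, p3, Or.inr hbp, scbd, scac.symm,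
        fun h => nscab (scac.trans h.symm)⟩
    · obtain ⟨p2, p3⟩ := cyc4_incr _ p q hq hf _ hS
        hcS hdS haS hbS
        (fun s hs => by rcases hmem4 s hs with rfl | rfl | rfl | rfl <;> simp) hcd (Ne.symm hac) (Ne.symm hbc) (Ne.symm had) (Ne.symm hbd) hab
        e3 e4 m3 m1 m2
      exact ⟨c, d, a, b, m3, p2, p3, Or.inr hcp, scac.symm, scbd.symm,
        fun h => nscab (scac.trans (h.trans scbd.symm))⟩
    · obtain ⟨p2, p3⟩ := cyc4_incr _ p q hq hf _ hS
        hdS haS hbS hcS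
        (fun s hs => by rcases hmem4 s hs with rfl | rfl | rfl | rfl <;> simp) (Ne.symm had) (Ne.symm hbd) (Ne.symm hcd) hab hac hbc
        e4 e1 m1 m2 m3
      exact ⟨d, a, b, c, m1, p2, p3, Or.inr hdp, scbd.symm, scac,
        fun h => nscab (h.symm.trans scbd.symm)⟩

end ACLemmas
/-- Remark 3.8: for a `(p,q)`-disconnected permutation `τ` (so that the external and the
internal points are unions of orbits of `τ`, and `τ` splits as `τ_ext` on `{1,…,p}` and
`τ_int` on `{p+1,…,p+q}`), one has `τ ∈ S_ann-nc(p,q)` iff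
`τ_ext ∈ S_disc-nc({1,…,p})` and `τ_int ∈ S_disc-nc({p+1,…,p+q})`
(disc non-crossing relative to the forward cycles `γ_ext` resp. `γ_int`). -/
theorem stmt_4 (p q : ℕ) (hp : 0 < p) (hq : 0 < q)
    (τ τext τint : Equiv.Perm (Fin (p + q)))
    (hdisc : ¬ AnnConnected p q τ)
    (hext : ∀ i : Fin (p + q), τext i = if (i : ℕ) < p then τ i else i)
    (hint : ∀ i : Fin (p + q), τint i = if p ≤ (i : ℕ) then τ i else i) :
    AnnNC p q τ ↔
      DiscNCRel (gammaExt p q) τext ∧ DiscNCRel (gammaInt p q) τint := by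
  classical
  have hside : ∀ x y : Fin (p + q), τ.SameCycle x y → ((x : ℕ) < p ↔ (y : ℕ) < p) := by
    intro x y hxy
    constructor
    · intro h
      by_contra hcon
      exact hdisc ⟨{b | τ.SameCycle x b}, ⟨x, rfl⟩,
        ⟨x, Equiv.Perm.SameCycle.refl _ _, h⟩, ⟨y, hxy, show p ≤ (y : ℕ) by omega⟩⟩
    · intro h
      by_contra hcon
      exact hdisc ⟨{b | τ.SameCycle x b}, ⟨x, rfl⟩,
        ⟨y, hxy, h⟩, ⟨x, Equiv.Perm.SameCycle.refl _ _, show p ≤ (x : ℕ) by omega⟩⟩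
  have sc1 : ∀ x : Fin (p + q), τ.SameCycle x (τ x) := by
    intro x
    simpa using sameCycle_iterate τ x 1
  have hext_ap : ∀ x : Fin (p + q), (x : ℕ) < p → τext x = τ x := fun x h => by
    rw [hext x, if_pos h]
  have hext_fix : ∀ x : Fin (p + q), p ≤ (x : ℕ) → τext x = x := fun x h => by
    rw [hext x, if_neg (by omega)]
  have hint_ap : ∀ x : Fin (p + q), p ≤ (x : ℕ) → τint x = τ x := fun x h => by
    rw [hint x, if_pos h]
  have hint_fix : ∀ x : Fin (p + q), (x : ℕ) < p → τint x = x := fun x h => by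
    rw [hint x, if_neg (by omega)]
  have hiter_ext : ∀ x : Fin (p + q), (x : ℕ) < p →
      ∀ k, (⇑τext)^[k] x = (⇑τ)^[k] x ∧ ((⇑τ)^[k] x : ℕ) < p := by
    intro x h k
    induction k with
    | zero => exact ⟨rfl, h⟩
    | succ k ih =>
      rw [Function.iterate_succ_apply', Function.iterate_succ_apply', ih.1]
      have h2 : ((τ ((⇑τ)^[k] x) : Fin (p + q)) : ℕ) < p := (hside _ _ (sc1 _)).1 ih.2
      exact ⟨hext_ap _ ih.2, h2⟩
  have hiter_int : ∀ x : Fin (p + q), p ≤ (x : ℕ) →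
      ∀ k, (⇑τint)^[k] x = (⇑τ)^[k] x ∧ p ≤ ((⇑τ)^[k] x : ℕ) := by
    intro x h k
    induction k with
    | zero => exact ⟨rfl, h⟩
    | succ k ih =>
      rw [Function.iterate_succ_apply', Function.iterate_succ_apply', ih.1]
      have h2 : p ≤ ((τ ((⇑τ)^[k] x) : Fin (p + q)) : ℕ) := by
        have := hside ((⇑τ)^[k] x) (τ ((⇑τ)^[k] x)) (sc1 _)
        omega
      exact ⟨hint_ap _ ih.2, h2⟩
  have hsc_ext : ∀ x y : Fin (p + q), (x : ℕ) < p → (τext.SameCycle x y ↔ τ.SameCycle x y) := by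
    intro x y hx
    constructor
    · intro h
      obtain ⟨k, -, hk⟩ := sameCycle_exists_iter h
      rw [(hiter_ext x hx k).1] at hk
      exact hk ▸ sameCycle_iterate τ x k
    · intro h
      obtain ⟨k, -, hk⟩ := sameCycle_exists_iter h
      rw [← (hiter_ext x hx k).1] at hk
      exact hk ▸ sameCycle_iterate τext x k
  have hsc_int : ∀ x y : Fin (p + q), p ≤ (x : ℕ) → (τint.SameCycle x y ↔ τ.SameCycle x y) := by
    intro x y hx
    constructor
    · intro h
      obtain ⟨k, -, hk⟩ := sameCycle_exists_iter h
      rw [(hiter_int x hx k).1] at hk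
      exact hk ▸ sameCycle_iterate τ x k
    · intro h
      obtain ⟨k, -, hk⟩ := sameCycle_exists_iter h
      rw [← (hiter_int x hx k).1] at hk
      exact hk ▸ sameCycle_iterate τint x k
  have hfix_ext : ∀ x y : Fin (p + q), p ≤ (x : ℕ) → τext.SameCycle x y → y = x := by
    intro x y hx h
    obtain ⟨k, -, hk⟩ := sameCycle_exists_iter h
    rw [Function.iterate_fixed (hext_fix x hx) k] at hk
    exact hk.symm
  have hfix_int : ∀ x y : Fin (p + q), (x : ℕ) < p → τint.SameCycle x y → y = x := by
    intro x y hx h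
    obtain ⟨k, -, hk⟩ := sameCycle_exists_iter h
    rw [Function.iterate_fixed (hint_fix x hx) k] at hk
    exact hk.symm
  have horb_ext : ∀ a : Fin (p + q), (a : ℕ) < p →
      {x | τ.SameCycle a x} ∩ extSet p q = {x | τ.SameCycle a x} ∧
      {x | τ.SameCycle a x} ∩ intSet p q = (∅ : Set (Fin (p + q))) := by
    intro a ha
    constructor
    · apply Set.ext
      intro x
      exact ⟨fun h => h.1, fun h => ⟨h, (hside a x h).1 ha⟩⟩
    · apply Set.ext
      intro x
      refine ⟨fun h => ?_, fun h => absurd h (Set.notMem_empty x)⟩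
      have h1 : (x : ℕ) < p := (hside a x h.1).1 ha
      have h2 : p ≤ (x : ℕ) := h.2
      omega
  have horb_int : ∀ a : Fin (p + q), p ≤ (a : ℕ) →
      {x | τ.SameCycle a x} ∩ intSet p q = {x | τ.SameCycle a x} ∧
      {x | τ.SameCycle a x} ∩ extSet p q = (∅ : Set (Fin (p + q))) := by
    intro a ha
    constructor
    · apply Set.ext
      intro x
      refine ⟨fun h => h.1, fun h => ⟨h, ?_⟩⟩
      have := hside a x h
      show p ≤ (x : ℕ)
      omega
    · apply Set.ext
      intro x
      refine ⟨fun h => ?_, fun h => absurd h (Set.notMem_empty x)⟩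
      have h1 : (x : ℕ) < p := h.2
      have := hside a x h.1
      omega
  constructor
  · rintro ⟨⟨hstd1, -⟩, hac1, -, -⟩
    refine ⟨⟨?_, ?_⟩, ?_, ?_⟩
    · -- DiscStandardRel (gammaExt p q) τext
      rintro A ⟨a, rfl⟩ b hbA
      rcases Nat.lt_or_ge (a : ℕ) p with hap | hap
      · have hAeq : {x | τext.SameCycle a x} = {x | τ.SameCycle a x} :=
          Set.ext fun x => hsc_ext a x hap
        rw [hAeq] at hbA ⊢
        have hbe : (b : ℕ) < p := (hside a b hbA).1 hap
        have hAx := (horb_ext a hap).1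
        have h := (hstd1 _ ⟨a, rfl⟩).1 b (by rw [hAx]; exact hbA)
        rw [hAx] at h
        rw [← h]
        exact induced_congr fun k => (hiter_ext b hbe k).1
      · have hAeq : {x | τext.SameCycle a x} = {a} := by
          apply Set.ext
          intro x
          simp only [Set.mem_setOf_eq, Set.mem_singleton_iff]
          exact ⟨fun h => hfix_ext a x hap h, fun h => h ▸ Equiv.Perm.SameCycle.refl _ _⟩
        rw [hAeq] at hbA ⊢
        have hba : b = a := hbA
        subst hba
        rw [induced_singleton, induced_singleton]
    · -- OrbitsNoCrossing τext
      rintro ⟨a, b, c, d, hab, hbc, hcd, hsac, hsbd, hnab⟩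
      have v1 := Fin.lt_def.mp hab
      have v2 := Fin.lt_def.mp hbc
      have v3 := Fin.lt_def.mp hcd
      have hae : (a : ℕ) < p := by
        by_contra h
        have hfix : c = a := hfix_ext a c (by omega) hsac
        rw [hfix] at v2
        omega
      have hbe : (b : ℕ) < p := by
        by_contra h
        have hfix : d = b := hfix_ext b d (by omega) hsbd
        rw [hfix] at v3
        omega
      have hsac' := (hsc_ext a c hae).1 hsac
      have hsbd' := (hsc_ext b d hbe).1 hsbd
      have hde : (d : ℕ) < p := (hside b d hsbd').1 hbe
      exact hac1 (crossing_to_AC1 hp hq τ v1 v2 v3 (Or.inl hde) hsac' hsbd'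
        (fun hh => hnab ((hsc_ext a b hae).2 hh)))
    · -- DiscStandardRel (gammaInt p q) τint
      rintro A ⟨a, rfl⟩ b hbA
      rcases Nat.lt_or_ge (a : ℕ) p with hap | hap
      · have hAeq : {x | τint.SameCycle a x} = {a} := by
          apply Set.ext
          intro x
          simp only [Set.mem_setOf_eq, Set.mem_singleton_iff]
          exact ⟨fun h => hfix_int a x hap h, fun h => h ▸ Equiv.Perm.SameCycle.refl _ _⟩
        rw [hAeq] at hbA ⊢
        have hba : b = a := hbA
        subst hba
        rw [induced_singleton, induced_singleton]
      · have hAeq : {x | τint.SameCycle a x} = {x | τ.SameCycle a x} :=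
          Set.ext fun x => hsc_int a x hap
        rw [hAeq] at hbA ⊢
        have hbe : p ≤ (b : ℕ) := by
          have := hside a b hbA
          omega
        have hAx := (horb_int a hap).1
        have h := (hstd1 _ ⟨a, rfl⟩).2 b (by rw [hAx]; exact hbA)
        rw [hAx] at h
        rw [← h]
        exact induced_congr fun k => (hiter_int b hbe k).1
    · -- OrbitsNoCrossing τint
      rintro ⟨a, b, c, d, hab, hbc, hcd, hsac, hsbd, hnab⟩
      have v1 := Fin.lt_def.mp hab
      have v2 := Fin.lt_def.mp hbc
      have v3 := Fin.lt_def.mp hcd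
      have hae : p ≤ (a : ℕ) := by
        by_contra h
        have hfix : c = a := hfix_int a c (by omega) hsac
        rw [hfix] at v2
        omega
      have hbe : p ≤ (b : ℕ) := by
        by_contra h
        have hfix : d = b := hfix_int b d (by omega) hsbd
        rw [hfix] at v3
        omega
      have hsac' := (hsc_int a c hae).1 hsac
      have hsbd' := (hsc_int b d hbe).1 hsbd
      exact hac1 (crossing_to_AC1 hp hq τ v1 v2 v3 (Or.inr hae) hsac' hsbd'
        (fun hh => hnab ((hsc_int a b hae).2 hh)))
  · rintro ⟨⟨hstdE, hncE⟩, hstdI, hncI⟩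
    refine ⟨⟨?_, ?_⟩, ?_, ?_, ?_⟩
    · -- part 1 of AnnStandard
      rintro A ⟨a, rfl⟩
      rcases Nat.lt_or_ge (a : ℕ) p with hap | hap
      · obtain ⟨hAx, hAi⟩ := horb_ext a hap
        constructor
        · intro b hb
          rw [hAx] at hb ⊢
          have hbe : (b : ℕ) < p := (hside a b hb).1 hap
          have horb : IsOrbit τext {x | τ.SameCycle a x} :=
            ⟨a, Set.ext fun x => (hsc_ext a x hap).symm⟩
          have h := hstdE _ horb b hb
          rw [← h]
          exact (induced_congr fun k => (hiter_ext b hbe k).1).symm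
        · intro b hb
          rw [hAi] at hb
          exact absurd hb (Set.notMem_empty b)
      · obtain ⟨hAx, hAi⟩ := horb_int a hap
        constructor
        · intro b hb
          rw [hAi] at hb
          exact absurd hb (Set.notMem_empty b)
        · intro b hb
          rw [hAx] at hb ⊢
          have hbe : p ≤ (b : ℕ) := by
            have := hside a b hb
            omega
          have horb : IsOrbit τint {x | τ.SameCycle a x} :=
            ⟨a, Set.ext fun x => (hsc_int a x hap).symm⟩
          have h := hstdI _ horb b hb
          rw [← h]
          exact (induced_congr fun k => (hiter_int b hbe k).1).symm
    · -- part 2 of AnnStandard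
      rintro A hA h1 h2
      exact absurd ⟨A, hA, h1, h2⟩ hdisc
    · -- ¬ AC1
      intro h
      obtain ⟨a, b, c, d, o1, o2, o3, hsd, hsac, hsbd, hnab⟩ := AC1_to_crossing hp hq h
      rcases hsd with hExt | hInt
      · have hae : (a : ℕ) < p := by omega
        have hbe : (b : ℕ) < p := by omega
        exact hncE ⟨a, b, c, d, Fin.lt_def.mpr o1, Fin.lt_def.mpr o2, Fin.lt_def.mpr o3,
          (hsc_ext a c hae).2 hsac, (hsc_ext b d hbe).2 hsbd,
          fun hh => hnab ((hsc_ext a b hae).1 hh)⟩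
      · have hae : p ≤ (a : ℕ) := hInt
        have hbe : p ≤ (b : ℕ) := by omega
        exact hncI ⟨a, b, c, d, Fin.lt_def.mpr o1, Fin.lt_def.mpr o2, Fin.lt_def.mpr o3,
          (hsc_int a c hae).2 hsac, (hsc_int b d hbe).2 hsbd,
          fun hh => hnab ((hsc_int a b hae).1 hh)⟩
    · -- ¬ AC2
      rintro ⟨a, b, c, x, y, hpw, hx, hy, -, -, hswap⟩
      have h1 : (x : ℕ) < p := hx
      have h2 : p ≤ (y : ℕ) := hy
      have hxy : x ≠ y := fun h => by rw [h] at h1; omega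
      obtain ⟨k, -, hk, -, -⟩ := induced_ne (Ne.symm hxy) hswap.1
      have hsc : τ.SameCycle x y := hk ▸ sameCycle_iterate τ x k
      have := (hside x y hsc).1 h1
      omega
    · -- ¬ AC3
      rintro ⟨a, b, c, d, x, y, hpw, hx, hy, -, -, hswap⟩
      have h1 : (x : ℕ) < p := hx
      have h2 : p ≤ (y : ℕ) := hy
      have hxy : x ≠ y := fun h => by rw [h] at h1; omega
      obtain ⟨k, -, hk, -, -⟩ := induced_ne (Ne.symm hxy) hswap.1
      have hsc : τ.SameCycle x y := hk ▸ sameCycle_iterate τ x k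
      have := (hside x y hsc).1 h1
      omega
end

section
/- Let p and q be positive integers and let π be a partition of [p+q] belonging to NC_ann(p,q) which has at least two (p,q)-connecting blocks. Then there exists a unique permutation τ ∈ S_ann-nc(p,q) whose partition into orbits equals π. -/
/-!
If two permutations `τ₁ ≠ τ₂` in `S_ann-nc(p,q)` have the same orbits, pick `z` with
`τ₁ z ≠ τ₂ z`; then `z, τ₁ z, τ₂ z` are three distinct points of one orbit. A second connecting
block supplies an external `x` and an internal `y` outside that orbit. Since `λ_{x,y}` is a single
cycle through all points but `x, y`, it induces a 3-cycle on `{z, τ₁ z, τ₂ z}`, whereas on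
`{z, τ₁ z, τ₂ z, x, y}` the permutations `τ₁` and `τ₂` induce the two opposite 3-cycles times
`(x, y)`. The one running against `λ_{x,y}` exhibits (AC-2).
-/

section Induced

open Equiv

variable {α : Type*} (τ : Perm α) {S : Set α} {a b c x y z w : α}

theorem sameCycle_induced : τ.SameCycle z (induced τ S z) := by
  classical
  unfold induced
  split_ifs with h
  · exact ⟨Nat.find h, by rw [zpow_natCast, Perm.coe_pow]⟩
  · exact Perm.SameCycle.refl _ _

theorem induced_of_apply_mem (f : α → α) (h : f z ∈ S) : induced f S z = f z := by
  classical
  have hex : ∃ k, 0 < k ∧ f^[k] z ∈ S := ⟨1, one_pos, h⟩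
  have hfind : Nat.find hex = 1 :=
    le_antisymm (Nat.find_min' hex ⟨one_pos, h⟩) (Nat.find_spec hex).1
  simp only [induced, dif_pos hex, hfind, Function.iterate_one]

variable [Finite α]

theorem exists_induced_eq_iterate (hz : z ∈ S) :
    ∃ k, 0 < k ∧ induced τ S z = τ^[k] z ∧ τ^[k] z ∈ S ∧ ∀ j, 0 < j → τ^[j] z ∈ S → k ≤ j := by
  classical
  have hex : ∃ k, 0 < k ∧ τ^[k] z ∈ S :=
    ⟨orderOf τ, orderOf_pos τ, by rwa [← Perm.coe_pow, pow_orderOf_eq_one]⟩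
  exact ⟨Nat.find hex, (Nat.find_spec hex).1, by simp only [induced, dif_pos hex],
    (Nat.find_spec hex).2, fun j hj hjS => Nat.find_min' hex ⟨hj, hjS⟩⟩

theorem induced_mem (hz : z ∈ S) : induced τ S z ∈ S := by
  obtain ⟨k, -, hk, hkS, -⟩ := exists_induced_eq_iterate τ hz
  exact hk ▸ hkS

theorem induced_ne_self (hz : z ∈ S) (hw : w ∈ S) (hwz : w ≠ z) (h : τ.SameCycle z w) :
    induced τ S z ≠ z := by
  obtain ⟨k, hk, heq, -, hmin⟩ := exists_induced_eq_iterate τ hz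
  intro hfix
  obtain ⟨m, -, -, hm⟩ := h.exists_pow_eq''
  rw [Perm.coe_pow] at hm
  have hper : τ^[m % k] z = w := by
    rw [← hm]
    exact Function.IsPeriodicPt.iterate_mod_apply (heq.symm.trans hfix) m
  rcases Nat.eq_zero_or_pos (m % k) with h0 | hpos
  · exact hwz (by rw [← hper, h0, Function.iterate_zero_apply])
  · have := hmin _ hpos (hper ▸ hw)
    have := Nat.mod_lt m hk
    omega

theorem induced_injOn : S.InjOn (induced τ S) := by
  intro z hz w hw h
  obtain ⟨k₁, hk₁, h₁, -, hmin₁⟩ := exists_induced_eq_iterate τ hz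
  obtain ⟨k₂, hk₂, h₂, -, hmin₂⟩ := exists_induced_eq_iterate τ hw
  rw [h₁, h₂] at h
  clear h₁ h₂
  wlog hle : k₂ ≤ k₁ generalizing z w k₁ k₂
  · exact (this hw hz k₂ hk₂ hmin₂ k₁ h.symm hk₁ hmin₁ (by omega)).symm
  have hback : τ^[k₁ - k₂] z = w := (τ.injective.iterate k₂) <| by
    rw [← Function.iterate_add_apply, Nat.add_sub_cancel' hle, h]
  rcases Nat.eq_zero_or_pos (k₁ - k₂) with h0 | hpos
  · rwa [h0, Function.iterate_zero_apply] at hback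
  · have := hmin₁ _ hpos (hback ▸ hw)
    omega

theorem induced_mem_inter_sameCycle (hz : z ∈ S ∩ {w | τ.SameCycle a w}) :
    induced τ S z ∈ S ∩ {w | τ.SameCycle a w} :=
  ⟨induced_mem τ hz.1, hz.2.trans (sameCycle_induced τ)⟩

theorem mapsSwap_of_inter_sameCycle_eq_pair (hxy : x ≠ y)
    (h : S ∩ {w | τ.SameCycle x w} = {x, y}) : MapsSwap τ S x y := by
  have hx : x ∈ S ∩ {w | τ.SameCycle x w} := h ▸ Or.inl rfl
  have hy : y ∈ S ∩ {w | τ.SameCycle x w} := h ▸ Or.inr rfl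
  have hx' : induced τ S x ∈ ({x, y} : Set α) := h ▸ induced_mem_inter_sameCycle τ hx
  have hy' : induced τ S y ∈ ({x, y} : Set α) := h ▸ induced_mem_inter_sameCycle τ hy
  exact ⟨hx'.resolve_left (induced_ne_self τ hx.1 hy.1 hxy.symm hy.2),
    hy'.resolve_right (induced_ne_self τ hy.1 hx.1 hxy hy.2.symm)⟩

theorem mapsCyc3_of_inter_sameCycle_eq_triple (hab : a ≠ b) (hac : a ≠ c) (hbc : b ≠ c)
    (h : S ∩ {w | τ.SameCycle a w} = {a, b, c}) (hind : induced τ S a = b) :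
    MapsCyc3 τ S a b c := by
  have hmem : ∀ {z}, z ∈ ({a, b, c} : Set α) → z ∈ S ∩ {w | τ.SameCycle a w} :=
    fun hz => h ▸ hz
  have hmaps : ∀ {z}, z ∈ ({a, b, c} : Set α) → induced τ S z ∈ ({a, b, c} : Set α) :=
    fun hz => h ▸ induced_mem_inter_sameCycle τ (hmem hz)
  have ha : a ∈ ({a, b, c} : Set α) := by simp
  have hb : b ∈ ({a, b, c} : Set α) := by simp
  have hc : c ∈ ({a, b, c} : Set α) := by simp
  have hinj := induced_injOn τ (S := S)
  have hca : induced τ S c = a := by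
    rcases hmaps hc with h' | h' | h'
    · exact h'
    · exact absurd (hinj (hmem ha).1 (hmem hc).1 (hind.trans h'.symm)) hac
    · exact absurd h' (induced_ne_self τ (hmem hc).1 (hmem ha).1 hac (hmem hc).2.symm)
  refine ⟨hind, ?_, hca⟩
  rcases hmaps hb with h' | h' | h'
  · exact absurd (hinj (hmem hb).1 (hmem hc).1 (h'.trans hca.symm)) hbc
  · exact absurd h' (induced_ne_self τ (hmem hb).1 (hmem ha).1 hab (hmem hb).2.symm)
  · exact h'

theorem mapsCyc3_or_mapsCyc3_of_inter_sameCycle_eq_triple (hab : a ≠ b) (hac : a ≠ c)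
    (hbc : b ≠ c) (h : S ∩ {w | τ.SameCycle a w} = {a, b, c}) :
    MapsCyc3 τ S a b c ∨ MapsCyc3 τ S a c b := by
  have ha : a ∈ S ∩ {w | τ.SameCycle a w} := h ▸ Or.inl rfl
  have hb : b ∈ S ∩ {w | τ.SameCycle a w} := h ▸ Or.inr (Or.inl rfl)
  have hmaps : induced τ S a ∈ ({a, b, c} : Set α) := h ▸ induced_mem_inter_sameCycle τ ha
  rcases hmaps with h' | h' | h'
  · exact absurd h' (induced_ne_self τ ha.1 hb.1 hab.symm hb.2)
  · exact Or.inl (mapsCyc3_of_inter_sameCycle_eq_triple τ hab hac hbc h h')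
  · exact Or.inr (mapsCyc3_of_inter_sameCycle_eq_triple τ hac hab hbc.symm
      (by rw [h, Set.pair_comm]) h')

end Induced

namespace List

theorem map_range_formPerm_pow_succ {α : Type*} [DecidableEq α] {l : List α} (hl : l.Nodup)
    {i n : ℕ} {x : α} (hi : i < l.length) (hx : l[i] = x) (hn : l.length = n) :
    (range (n - 1)).map (fun k => (l.formPerm ^ (k + 1)) x) = (l.rotate i).tail := by
  subst hx hn
  refine ext_getElem (by simp) fun k h₁ h₂ => ?_
  simp only [getElem_map, getElem_range, formPerm_pow_apply_getElem _ hl, getElem_tail,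
    getElem_rotate, Nat.add_comm i, Nat.add_right_comm k 1 i]

theorem mem_tail_rotate_iff {α : Type*} {l : List α} (hl : l.Nodup) {i : ℕ} (hi : i < l.length)
    {z : α} : z ∈ (l.rotate i).tail ↔ z ∈ l ∧ z ≠ l[i] := by
  have hrot : l.rotate i = l[i] :: (l.drop (i + 1) ++ l.take i) := by
    rw [rotate_eq_drop_append_take hi.le, drop_eq_getElem_cons hi, cons_append]
  have hnd : (l[i] :: (l.drop (i + 1) ++ l.take i)).Nodup := hrot ▸ nodup_rotate.2 hl
  rw [← mem_rotate (n := i) (a := z) (l := l), hrot, tail_cons, mem_cons]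
  constructor
  · exact fun hz => ⟨Or.inr hz, fun h => (nodup_cons.1 hnd).1 (h ▸ hz)⟩
  · rintro ⟨h | h, hne⟩
    · exact absurd h hne
    · exact h

theorem two_le_length_of_mem_of_ne {α : Type*} {l : List α} {a b : α} (ha : a ∈ l) (hb : b ∈ l)
    (hab : a ≠ b) : 2 ≤ l.length := by
  rcases l with _ | ⟨u, _ | ⟨v, l⟩⟩
  · simp at ha
  · simp_all
  · simp

theorem mem_take_finRange_iff {n p : ℕ} {z : Fin n} :
    z ∈ (finRange n).take p ↔ (z : ℕ) < p := by
  simp [mem_take_iff_getElem, Fin.ext_iff]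

theorem mem_drop_finRange_iff {n p : ℕ} {z : Fin n} :
    z ∈ (finRange n).drop p ↔ p ≤ (z : ℕ) := by
  simp only [mem_drop_iff_getElem, length_finRange, getElem_finRange, Fin.ext_iff,
    Fin.val_cast]
  constructor
  · rintro ⟨j, -, hj⟩
    omega
  · exact fun h => ⟨z - p, by omega, by omega⟩

end List

theorem sameCycle_lamPerm {p q : ℕ} {x y z w : Fin (p + q)} (hx : x ∈ extSet p q)
    (hy : y ∈ intSet p q) (hz : z ≠ x ∧ z ≠ y) (hw : w ≠ x ∧ w ≠ y) :
    (lamPerm p q x y).SameCycle z w := by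
  have hxp : (x : ℕ) < p := hx
  have hyp : p ≤ (y : ℕ) := hy
  set E := (List.finRange (p + q)).take p
  set I := (List.finRange (p + q)).drop p
  have hE : E.Nodup := (List.take_sublist _ _).nodup (List.nodup_finRange _)
  have hI : I.Nodup := (List.drop_sublist _ _).nodup (List.nodup_finRange _)
  have hxE : (x : ℕ) < E.length := by simp [E]; omega
  have hyI : (y : ℕ) - p < I.length := by simp [I]; omega
  have hEx : E[(x : ℕ)] = x := by simp [E]
  have hIy : I[(y : ℕ) - p] = y := by ext; simp [I]; omega
  set L := (E.rotate x).tail ++ (I.rotate (y - p)).tail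
  have hlam : lamPerm p q x y = L.formPerm := by
    rw [lamPerm, gammaExt, gammaInt, List.map_range_formPerm_pow_succ hE hxE hEx (by simp [E]),
      List.map_range_formPerm_pow_succ hI hyI hIy (by simp [I])]
  have hmem : ∀ v, v ∈ L ↔ v ≠ x ∧ v ≠ y := by
    intro v
    rw [List.mem_append, List.mem_tail_rotate_iff hE hxE, List.mem_tail_rotate_iff hI hyI, hEx,
      hIy, List.mem_take_finRange_iff, List.mem_drop_finRange_iff]
    simp only [ne_eq, Fin.ext_iff]
    omega
  have hL : L.Nodup := by
    refine ((List.nodup_rotate.2 hE).sublist (List.tail_sublist _)).append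
      ((List.nodup_rotate.2 hI).sublist (List.tail_sublist _)) fun v hvE hvI => ?_
    have hvp := List.mem_take_finRange_iff.1 ((List.mem_tail_rotate_iff hE hxE).1 hvE).1
    have hpv := List.mem_drop_finRange_iff.1 ((List.mem_tail_rotate_iff hI hyI).1 hvI).1
    omega
  rcases eq_or_ne z w with rfl | hzw
  · exact Equiv.Perm.SameCycle.refl _ _
  have hlen : 2 ≤ L.length := List.two_le_length_of_mem_of_ne ((hmem z).2 hz) ((hmem w).2 hw) hzw
  rw [hlam]
  exact (List.isCycle_formPerm hL hlen).sameCycle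
    ((List.formPerm_apply_mem_ne_self_iff _ hL _ ((hmem z).2 hz)).2 hlen)
    ((List.formPerm_apply_mem_ne_self_iff _ hL _ ((hmem w).2 hw)).2 hlen)

section Uniqueness

open Equiv

variable {p q : ℕ}

theorem lamPerm_mapsCyc3_or_mapsCyc3 {x y a b c : Fin (p + q)} (hx : x ∈ extSet p q)
    (hy : y ∈ intSet p q) (hab : a ≠ b) (hac : a ≠ c) (hbc : b ≠ c) (ha : a ≠ x ∧ a ≠ y)
    (hb : b ≠ x ∧ b ≠ y) (hc : c ≠ x ∧ c ≠ y) :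
    MapsCyc3 (lamPerm p q x y) {a, b, c} a b c ∨ MapsCyc3 (lamPerm p q x y) {a, b, c} a c b :=
  mapsCyc3_or_mapsCyc3_of_inter_sameCycle_eq_triple _ hab hac hbc <| Set.inter_eq_left.2 <| by
    rintro v (rfl | rfl | rfl)
    exacts [sameCycle_lamPerm hx hy ha ha, sameCycle_lamPerm hx hy ha hb,
      sameCycle_lamPerm hx hy ha hc]

/-- Restricted to `{a, c, τ a, x, y}`, `τ` is `(a, τ a, c)(x, y)`, so a `λ_{x,y}` ordering
`(a, c, τ a)` is exactly the pattern (AC-2). -/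
theorem ac2_of_mapsCyc3_lamPerm {τ : Perm (Fin (p + q))} {a c x y : Fin (p + q)}
    (hx : x ∈ extSet p q) (hy : y ∈ intSet p q) (hac : a ≠ c) (hfix : τ a ≠ a) (hca : c ≠ τ a)
    (hc : τ.SameCycle a c) (hxy : τ.SameCycle x y) (hax : ¬ τ.SameCycle a x)
    (hlam : MapsCyc3 (lamPerm p q x y) {a, c, τ a} a c (τ a)) : AC2 p q τ := by
  have hsep : ∀ v, τ.SameCycle a v → v ≠ x ∧ v ≠ y := fun v hv =>
    ⟨by rintro rfl; exact hax hv, by rintro rfl; exact hax (hv.trans hxy.symm)⟩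
  have hτa : τ.SameCycle a (τ a) := Perm.sameCycle_apply_right.2 (Perm.SameCycle.refl _ _)
  obtain ⟨hax', hay'⟩ := hsep a (Perm.SameCycle.refl _ _)
  obtain ⟨hcx, hcy⟩ := hsep c hc
  obtain ⟨hτax, hτay⟩ := hsep (τ a) hτa
  have hxy' : x ≠ y := by
    rintro rfl
    exact absurd (show (x : ℕ) < p from hx) (not_lt.2 hy)
  set S : Set (Fin (p + q)) := {a, c, τ a, x, y}
  have horb_a : S ∩ {w | τ.SameCycle a w} = {a, τ a, c} := by
    ext v
    simp only [S, Set.mem_inter_iff, Set.mem_insert_iff, Set.mem_singleton_iff]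
    constructor
    · rintro ⟨rfl | rfl | rfl | rfl | rfl, hv⟩
      · exact Or.inl rfl
      · exact Or.inr (Or.inr rfl)
      · exact Or.inr (Or.inl rfl)
      · exact absurd hv hax
      · exact absurd rfl (hsep _ hv).2
    · rintro (rfl | rfl | rfl)
      · exact ⟨Or.inl rfl, .refl _ _⟩
      · exact ⟨Or.inr (Or.inr (Or.inl rfl)), hτa⟩
      · exact ⟨Or.inr (Or.inl rfl), hc⟩
  have horb_x : S ∩ {w | τ.SameCycle x w} = {x, y} := by
    ext v
    simp only [S, Set.mem_inter_iff, Set.mem_insert_iff, Set.mem_singleton_iff]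
    constructor
    · rintro ⟨rfl | rfl | rfl | rfl | rfl, hv⟩
      · exact absurd hv.symm hax
      · exact absurd (hc.trans hv.symm) hax
      · exact absurd (hτa.trans hv.symm) hax
      · exact Or.inl rfl
      · exact Or.inr rfl
    · rintro (rfl | rfl)
      · exact ⟨Or.inr (Or.inr (Or.inr (Or.inl rfl))), .refl _ _⟩
      · exact ⟨Or.inr (Or.inr (Or.inr (Or.inr rfl))), hxy⟩
  refine ⟨a, c, τ a, x, y, ?_, hx, hy, hlam, ?_, ?_⟩
  · simp [List.pairwise_cons, hac, hfix.symm, hax', hay', hca, hcx, hcy, hτax, hτay, hxy']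
  · exact mapsCyc3_of_inter_sameCycle_eq_triple τ (Ne.symm hfix) hac hca.symm horb_a
      (induced_of_apply_mem _ (by simp))
  · exact mapsSwap_of_inter_sameCycle_eq_pair τ hxy' horb_x

theorem eq_of_sameCycle_iff_of_not_ac2 {τ₁ τ₂ : Perm (Fin (p + q))}
    (hsc : ∀ a b, τ₁.SameCycle a b ↔ τ₂.SameCycle a b)
    (hconn : ∀ z, ∃ x ∈ extSet p q, ∃ y ∈ intSet p q, τ₁.SameCycle x y ∧ ¬ τ₁.SameCycle z x)
    (h₁ : ¬ AC2 p q τ₁) (h₂ : ¬ AC2 p q τ₂) : τ₁ = τ₂ := by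
  refine Equiv.ext fun z => ?_
  by_contra hne
  obtain ⟨x, hx, y, hy, hxy, hzx⟩ := hconn z
  have hz₁ : τ₁.SameCycle z (τ₁ z) := Perm.sameCycle_apply_right.2 (.refl _ _)
  have hz₂ : τ₁.SameCycle z (τ₂ z) := (hsc _ _).2 (Perm.sameCycle_apply_right.2 (.refl _ _))
  have hfix₁ : τ₁ z ≠ z := fun h => hne (h.trans (hz₂.eq_of_left h))
  have hfix₂ : τ₂ z ≠ z := fun h =>
    hne ((((hsc _ _).1 hz₁).eq_of_left h).symm.trans h.symm)
  have hsep : ∀ v, τ₁.SameCycle z v → v ≠ x ∧ v ≠ y := fun v hv =>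
    ⟨by rintro rfl; exact hzx hv, by rintro rfl; exact hzx (hv.trans hxy.symm)⟩
  rcases lamPerm_mapsCyc3_or_mapsCyc3 hx hy (Ne.symm hfix₁) (Ne.symm hfix₂) hne
    (hsep z (.refl _ _)) (hsep _ hz₁) (hsep _ hz₂) with hlam | hlam
  · exact h₂ (ac2_of_mapsCyc3_lamPerm hx hy (Ne.symm hfix₁) hfix₂ hne ((hsc _ _).1 hz₁)
      ((hsc _ _).1 hxy) (fun h => hzx ((hsc _ _).2 h)) hlam)
  · exact h₁ (ac2_of_mapsCyc3_lamPerm hx hy (Ne.symm hfix₂) hfix₁ (Ne.symm hne) hz₂ hxy hzx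
      (by rwa [Set.pair_comm]))

end Uniqueness

theorem IsOrbit.eq_setOf_sameCycle {α : Type*} {σ : Equiv.Perm α} {B : Set α} {z : α}
    (hB : IsOrbit σ B) (hz : z ∈ B) : B = {w | σ.SameCycle z w} := by
  obtain ⟨c, rfl⟩ := hB
  ext w
  exact ⟨hz.symm.trans, hz.trans⟩

theorem sameCycle_iff_of_orbits_eq {α : Type*} {τ₁ τ₂ : Equiv.Perm α}
    (h : {A | IsOrbit τ₁ A} = {A | IsOrbit τ₂ A}) (a b : α) :
    τ₁.SameCycle a b ↔ τ₂.SameCycle a b := by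
  have horb : {b | τ₁.SameCycle a b} ∈ {A | IsOrbit τ₂ A} := h ▸ ⟨a, rfl⟩
  exact Set.ext_iff.1 (IsOrbit.eq_setOf_sameCycle horb (Equiv.Perm.SameCycle.refl _ _)) b

theorem exists_connecting_not_sameCycle {p q : ℕ} {σ : Equiv.Perm (Fin (p + q))}
    {B₁ B₂ : Set (Fin (p + q))} (h₁ : IsOrbit σ B₁) (h₂ : IsOrbit σ B₂) (hne : B₁ ≠ B₂)
    (hc₁ : ConnectingBlock p q B₁) (hc₂ : ConnectingBlock p q B₂) (z : Fin (p + q)) :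
    ∃ x ∈ extSet p q, ∃ y ∈ intSet p q, σ.SameCycle x y ∧ ¬ σ.SameCycle z x := by
  have key : ∀ B, IsOrbit σ B → ConnectingBlock p q B → z ∉ B →
      ∃ x ∈ extSet p q, ∃ y ∈ intSet p q, σ.SameCycle x y ∧ ¬ σ.SameCycle z x := by
    rintro B ⟨c, rfl⟩ ⟨⟨x, hxB, hx⟩, ⟨y, hyB, hy⟩⟩ hz
    exact ⟨x, hx, y, hy, hxB.symm.trans hyB, fun h => hz (hxB.trans h.symm)⟩
  by_cases hz₁ : z ∈ B₁
  · refine key B₂ h₂ hc₂ fun hz₂ => hne ?_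
    rw [h₁.eq_setOf_sameCycle hz₁, h₂.eq_setOf_sameCycle hz₂]
  · exact key B₁ h₁ hc₁ hz₁

theorem stmt_5_general (p q : ℕ) (π : Set (Set (Fin (p + q))))
    (hNC : ∃ τ : Equiv.Perm (Fin (p + q)), AnnNC p q τ ∧ {A | IsOrbit τ A} = π)
    (htwo : ∃ B₁ ∈ π, ∃ B₂ ∈ π, B₁ ≠ B₂ ∧ ConnectingBlock p q B₁ ∧ ConnectingBlock p q B₂) :
    ∃! τ : Equiv.Perm (Fin (p + q)), AnnNC p q τ ∧ {A | IsOrbit τ A} = π := by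
  obtain ⟨τ, hτ, horb⟩ := hNC
  refine ⟨τ, ⟨hτ, horb⟩, fun σ ⟨hσ, horbσ⟩ => ?_⟩
  obtain ⟨B₁, hB₁, B₂, hB₂, hne, hc₁, hc₂⟩ := htwo
  rw [← horbσ] at hB₁ hB₂
  exact eq_of_sameCycle_iff_of_not_ac2 (sameCycle_iff_of_orbits_eq (horbσ.trans horb.symm))
    (exists_connecting_not_sameCycle hB₁ hB₂ hne hc₁ hc₂) hσ.2.2.1 hτ.2.2.1

/-- Proposition 4.4: if `π ∈ NC_ann(p,q)` has at least two `(p,q)`-connecting blocks, then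
there exists a unique `τ ∈ S_ann-nc(p,q)` whose partition into orbits equals `π`. -/
theorem stmt_5 (p q : ℕ) (hp : 0 < p) (hq : 0 < q) (π : Set (Set (Fin (p + q))))
    (hpart : Setoid.IsPartition π)
    (hNC : ∃ τ : Equiv.Perm (Fin (p + q)), AnnNC p q τ ∧ {A | IsOrbit τ A} = π)
    (htwo : ∃ B₁ ∈ π, ∃ B₂ ∈ π, B₁ ≠ B₂ ∧ ConnectingBlock p q B₁ ∧ ConnectingBlock p q B₂) :
    ∃! τ : Equiv.Perm (Fin (p + q)), AnnNC p q τ ∧ {A | IsOrbit τ A} = π :=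
  stmt_5_general p q π hNC htwo
end

section
/- Let p and q be positive integers and let π be a partition of [p+q] with no (p,q)-connecting block. If π ∈ NC_ann(p,q), then there exists a unique permutation τ ∈ S_ann-nc(p,q) whose partition into orbits equals π. -/


lemma induced_eq_apply {α : Type*} (f : α → α) (A : Set α) (b : α) (h : f b ∈ A) :
    induced f A b = f b := by
  classical
  have hex : ∃ k, 0 < k ∧ f^[k] b ∈ A := ⟨1, one_pos, by simpa using h⟩
  rw [induced, dif_pos hex]
  have h1 : Nat.find hex ≤ 1 := Nat.find_le ⟨one_pos, by simpa using h⟩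
  have h0 : 0 < Nat.find hex := (Nat.find_spec hex).1
  have : Nat.find hex = 1 := le_antisymm h1 h0
  rw [this]; simp

lemma apply_det_ext (p q : ℕ) (τ : Equiv.Perm (Fin (p + q)))
    (hstd : AnnStandard p q τ) (b : Fin (p + q))
    (hempty : ({x | τ.SameCycle b x} : Set (Fin (p+q))) ∩ intSet p q = ∅)
    (hbext : b ∈ extSet p q) :
    τ b = induced (⇑(gammaExt p q)) {x | τ.SameCycle b x} b := by
  have hOrb : IsOrbit τ {x | τ.SameCycle b x} := ⟨b, rfl⟩
  have hbA : b ∈ {x | τ.SameCycle b x} := Equiv.Perm.SameCycle.refl τ b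
  have hτbA : τ b ∈ {x | τ.SameCycle b x} := ⟨1, by simp⟩
  have hAeq : {x | τ.SameCycle b x} ∩ extSet p q = {x | τ.SameCycle b x} := by
    apply Set.inter_eq_left.mpr
    intro x hx
    by_contra hxe
    have : x ∈ ({x | τ.SameCycle b x} : Set (Fin (p+q))) ∩ intSet p q :=
      ⟨hx, (le_of_not_gt hxe : p ≤ (x : ℕ))⟩
    simp [hempty] at this
  have h1 := (hstd.1 _ hOrb).1 b (by rw [hAeq]; exact hbA)
  rw [hAeq] at h1
  rw [← h1, induced_eq_apply _ _ _ hτbA]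

lemma apply_det_int (p q : ℕ) (τ : Equiv.Perm (Fin (p + q)))
    (hstd : AnnStandard p q τ) (b : Fin (p + q))
    (hempty : ({x | τ.SameCycle b x} : Set (Fin (p+q))) ∩ extSet p q = ∅)
    (hbint : b ∈ intSet p q) :
    τ b = induced (⇑(gammaInt p q)) {x | τ.SameCycle b x} b := by
  have hOrb : IsOrbit τ {x | τ.SameCycle b x} := ⟨b, rfl⟩
  have hbA : b ∈ {x | τ.SameCycle b x} := Equiv.Perm.SameCycle.refl τ b
  have hτbA : τ b ∈ {x | τ.SameCycle b x} := ⟨1, by simp⟩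
  have hAeq : {x | τ.SameCycle b x} ∩ intSet p q = {x | τ.SameCycle b x} := by
    apply Set.inter_eq_left.mpr
    intro x hx
    by_contra hxe
    have : x ∈ ({x | τ.SameCycle b x} : Set (Fin (p+q))) ∩ extSet p q :=
      ⟨hx, (lt_of_not_ge hxe : (x : ℕ) < p)⟩
    simp [hempty] at this
  have h1 := (hstd.1 _ hOrb).2 b (by rw [hAeq]; exact hbA)
  rw [hAeq] at h1
  rw [← h1, induced_eq_apply _ _ _ hτbA]

/-- Proposition 4.5 2°: if `π` is a partition of `[p+q]` with no `(p,q)`-connecting block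
and `π ∈ NC_ann(p,q)`, then there exists a unique permutation `τ ∈ S_ann-nc(p,q)` whose
partition into orbits equals `π`. -/
theorem stmt_7 (p q : ℕ) (hp : 0 < p) (hq : 0 < q) (π : Set (Set (Fin (p + q))))
    (hpart : Setoid.IsPartition π)
    (hnoconn : ∀ B ∈ π, ¬ ConnectingBlock p q B)
    (hNC : ∃ τ : Equiv.Perm (Fin (p + q)), AnnNC p q τ ∧ {A | IsOrbit τ A} = π) :
    ∃! τ : Equiv.Perm (Fin (p + q)), AnnNC p q τ ∧ {A | IsOrbit τ A} = π := by
  obtain ⟨τ, hτ, hτπ⟩ := hNC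
  refine ⟨τ, ⟨hτ, hτπ⟩, ?_⟩
  rintro τ' ⟨hτ', hτ'π⟩
  apply Equiv.ext
  intro b
  have hAπ : ({x | τ.SameCycle b x} : Set (Fin (p+q))) ∈ π := by
    rw [← hτπ]; exact ⟨b, rfl⟩
  have hA'π : ({x | τ'.SameCycle b x} : Set (Fin (p+q))) ∈ π := by
    rw [← hτ'π]; exact ⟨b, rfl⟩
  have hbA : b ∈ {x | τ.SameCycle b x} := Equiv.Perm.SameCycle.refl τ b
  have hbA' : b ∈ {x | τ'.SameCycle b x} := Equiv.Perm.SameCycle.refl τ' b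
  obtain ⟨B, ⟨_, _⟩, hBuniq⟩ := hpart.2 b
  have hAA' : ({x | τ.SameCycle b x} : Set (Fin (p+q))) = {x | τ'.SameCycle b x} := by
    rw [hBuniq _ ⟨hAπ, hbA⟩, hBuniq _ ⟨hA'π, hbA'⟩]
  have hnc : ¬ ConnectingBlock p q {x | τ.SameCycle b x} := hnoconn _ hAπ
  by_cases hb : (b : ℕ) < p
  · have hempty : ({x | τ.SameCycle b x} : Set (Fin (p+q))) ∩ intSet p q = ∅ := by
      by_contra h
      exact hnc ⟨⟨b, hbA, hb⟩, Set.nonempty_iff_ne_empty.mpr h⟩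
    have h1 := apply_det_ext p q τ hτ.1 b hempty hb
    have h2 := apply_det_ext p q τ' hτ'.1 b (hAA' ▸ hempty) hb
    rw [h1, h2, hAA']
  · have hbint : b ∈ intSet p q := le_of_not_gt hb
    have hempty : ({x | τ.SameCycle b x} : Set (Fin (p+q))) ∩ extSet p q = ∅ := by
      by_contra h
      exact hnc ⟨Set.nonempty_iff_ne_empty.mpr h, ⟨b, hbA, hbint⟩⟩
    have h1 := apply_det_int p q τ hτ.1 b hempty hbint
    have h2 := apply_det_int p q τ' hτ'.1 b (hAA' ▸ hempty) hbint
    rw [h1, h2, hAA']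
end
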